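/- arXiv:0910.5940 — 5 statements merged into one kernel-verified Lean document; each statement's English description precedes it below -/
import Mathlib

section
/- Let e ≥ 2 and let λ be a partition. Then λ is e-restricted if and only if every ladder L_m is bottom complete for λ, i.e., for every m ≥ 1, whenever a node (a,b) ∈ L_m belongs to λ and (a',b') ∈ L_m satisfies a' > a, then (a',b') also belongs to λ. -/
namespace KN

/-- A subset of `ℤ²_{≥1}` (encoded in `ℕ × ℕ`) shaped like a Young diagram:
all coordinates are `≥ 1` and the set is closed under decreasing either coordinate
(staying `≥ 1`). -/
def IsDiagram (S : Set (ℕ × ℕ)) : Prop :=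
  (∀ p ∈ S, 1 ≤ p.1 ∧ 1 ≤ p.2) ∧
  ∀ a b a' b', (a, b) ∈ S → 1 ≤ a' → a' ≤ a → 1 ≤ b' → b' ≤ b → (a', b') ∈ S

/-- The Young diagram of a partition given as a function `l : ℕ → ℕ`
(`l r` is the `r`-th part, for `r ≥ 1`): the nodes `(a, b)` with `a, b ≥ 1`, `b ≤ l a`. -/
def cells (l : ℕ → ℕ) : Set (ℕ × ℕ) := {p | 1 ≤ p.1 ∧ 1 ≤ p.2 ∧ p.2 ≤ l p.1}

/-- `l` (indexed from `1`) is a weakly decreasing sequence of naturals, eventually zero. -/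
def IsPartitionFun (l : ℕ → ℕ) : Prop :=
  (∀ r, 1 ≤ r → l (r + 1) ≤ l r) ∧ ∃ N, ∀ r, N ≤ r → l r = 0

/-- `l` is a partition of `d`: its Young diagram has exactly `d` nodes. -/
def IsPartitionOf (l : ℕ → ℕ) (d : ℕ) : Prop :=
  IsPartitionFun l ∧ (cells l).Finite ∧ (cells l).ncard = d

/-- `λ_r - λ_{r+1} < e` for all `r ≥ 1`. -/
def IsRestricted (e : ℕ) (l : ℕ → ℕ) : Prop := ∀ r, 1 ≤ r → l r < l (r + 1) + e

/-- The `m`-th ladder `L_m = {(1 + k, m - k(e-1)) : k ≥ 0, k(e-1) < m}`. -/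
def ladder (e m : ℕ) : Set (ℕ × ℕ) :=
  {p | ∃ k : ℕ, k * (e - 1) < m ∧ p = (1 + k, m - k * (e - 1))}

/-- The residue `b - a (mod e)` of a node `(a, b)`. -/
def res (e : ℕ) (p : ℕ × ℕ) : ZMod e := (p.2 : ZMod e) - (p.1 : ZMod e)

/-- `A` is a removable node of the diagram `S`. -/
def Removable (S : Set (ℕ × ℕ)) (A : ℕ × ℕ) : Prop := A ∈ S ∧ IsDiagram (S \ {A})

/-- `B` is an addable node of the diagram `S`. -/
def Addable (S : Set (ℕ × ℕ)) (B : ℕ × ℕ) : Prop := B ∉ S ∧ IsDiagram (S ∪ {B})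

/-- `σ_k` of a diagram: the number of nodes in rows `1, …, k`. -/
noncomputable def sigmaSet (S : Set (ℕ × ℕ)) (k : ℕ) : ℕ := (S ∩ {p | p.1 ≤ k}).ncard

/-- Dominance order on diagrams: `S ⊴ T` iff `σ_k(S) ≤ σ_k(T)` for all `k`. -/
def DomLE (S T : Set (ℕ × ℕ)) : Prop := ∀ k, sigmaSet S k ≤ sigmaSet T k

/-- `R_m = r_1(λ) + ⋯ + r_m(λ)` where `r_u(λ) = |λ ∩ L_u|`. -/
noncomputable def Rlad (e : ℕ) (l : ℕ → ℕ) (m : ℕ) : ℕ :=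
  ∑ u ∈ Finset.Icc 1 m, (cells l ∩ ladder e u).ncard

/-- The `s`-th entry of the ladder weight `j^λ`: it equals `m - 1 (mod e)` for the
unique `m` with `R_{m-1} < s ≤ R_m`. -/
noncomputable def ladderWeight (e : ℕ) (l : ℕ → ℕ) (s : ℕ) : ZMod e :=
  ((sInf {m : ℕ | s ≤ Rlad e l m} - 1 : ℕ) : ZMod e)

/-- A standard tableau of shape `S` (with `|S| = d`): a bijective labelling of the
nodes of `S` by `1, …, d`, increasing along rows and columns. -/
def IsStandardTableau (S : Set (ℕ × ℕ)) (d : ℕ) (T : ℕ × ℕ → ℕ) : Prop :=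
  (∀ p ∈ S, 1 ≤ T p ∧ T p ≤ d) ∧
  (∀ p ∈ S, ∀ q ∈ S, T p = T q → p = q) ∧
  (∀ s, 1 ≤ s → s ≤ d → ∃ p ∈ S, T p = s) ∧
  (∀ a b, (a, b) ∈ S → (a, b + 1) ∈ S → T (a, b) < T (a, b + 1)) ∧
  (∀ a b, (a, b) ∈ S → (a + 1, b) ∈ S → T (a, b) < T (a + 1, b))

/-- The degree `d_A(S)` of a removable node `A` of `S`:
(number of addable nodes of `S` of the same residue strictly below `A`) minus
(number of removable nodes of `S` of the same residue strictly below `A`). -/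
noncomputable def degNode (e : ℕ) (S : Set (ℕ × ℕ)) (A : ℕ × ℕ) : ℤ :=
  (({B | Addable S B ∧ res e B = res e A ∧ A.1 < B.1}).ncard : ℤ) -
  (({B | Removable S B ∧ res e B = res e A ∧ A.1 < B.1}).ncard : ℤ)

/-- The degree of a standard tableau: `deg(T) = Σ_{s=1}^d d_{A_s}(sh(T_{≤ s}))`,
written as a sum over the nodes `p` of `S` (with `s = T p`). -/
noncomputable def degTab (e : ℕ) (S : Set (ℕ × ℕ)) (T : ℕ × ℕ → ℕ) : ℤ :=
  ∑ᶠ p ∈ S, degNode e {q | q ∈ S ∧ T q ≤ T p} p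

/-- The set of standard tableaux of shape `S` (of size `d`) whose residue sequence
equals the ladder weight `j^λ` of the partition `l`; tableaux are normalized to
take the value `0` off `S`. -/
def LWTableaux (e d : ℕ) (l : ℕ → ℕ) (S : Set (ℕ × ℕ)) : Set ((ℕ × ℕ) → ℕ) :=
  {T | IsStandardTableau S d T ∧ (∀ p, p ∉ S → T p = 0) ∧
    ∀ p ∈ S, res e p = ladderWeight e l (T p)}

/-- The quantum integer `[n]_q = q^{n-1} + q^{n-3} + ⋯ + q^{1-n} ∈ ℤ[q, q⁻¹]`. -/
noncomputable def qint (n : ℕ) : LaurentPolynomial ℤ :=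
  ∑ k ∈ Finset.range n, LaurentPolynomial.T ((n : ℤ) - 1 - 2 * k)

/-- The quantum factorial `[n]_q! = [n]_q [n-1]_q ⋯ [1]_q`. -/
noncomputable def qfact (n : ℕ) : LaurentPolynomial ℤ :=
  ∏ k ∈ Finset.Icc 1 n, qint k

private lemma ladder_step (e : ℕ) (he : 2 ≤ e) (l : ℕ → ℕ) (hres : IsRestricted e l)
    (m : ℕ) : ∀ j k, (k + j) * (e - 1) < m → (1 + k, m - k * (e - 1)) ∈ cells l →
    (1 + (k + j), m - (k + j) * (e - 1)) ∈ cells l := by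
  intro j
  induction j with
  | zero => intro k h hc; simpa using hc
  | succ j ih =>
    intro k h hc
    have hmul : (k + (j + 1)) * (e - 1) = (k + j) * (e - 1) + (e - 1) := by ring
    have h' : (k + j) * (e - 1) < m := by omega
    have hcells := ih k h' hc
    simp only [cells, Set.mem_setOf_eq] at hcells ⊢
    have hr := hres (1 + (k + j)) (by omega)
    have heq : 1 + (k + j) + 1 = 1 + (k + (j + 1)) := by omega
    rw [heq] at hr
    omega

/-- a partition is `e`-restricted iff every ladder is bottom complete. -/
theorem restricted_iff_ladders_bottom_complete
    (e : ℕ) (he : 2 ≤ e) (l : ℕ → ℕ) (hl : IsPartitionFun l) :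
    IsRestricted e l ↔
      ∀ m, 1 ≤ m → ∀ a b, (a, b) ∈ ladder e m → (a, b) ∈ cells l →
        ∀ a' b', (a', b') ∈ ladder e m → a < a' → (a', b') ∈ cells l := by
  constructor
  · intro hres m _ a b hab hcell a' b' hab' haa'
    obtain ⟨k, hk, hpk⟩ := hab
    obtain ⟨k', hk', hpk'⟩ := hab'
    simp only [Prod.mk.injEq] at hpk hpk'
    obtain ⟨ha, hb⟩ := hpk
    obtain ⟨ha', hb'⟩ := hpk'
    subst ha hb ha' hb'
    have hkk' : k < k' := by omega
    have := ladder_step e he l hres m (k' - k) k (by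
      have : k + (k' - k) = k' := by omega
      rw [this]; exact hk') hcell
    have hkeq : k + (k' - k) = k' := by omega
    rwa [hkeq] at this
  · intro h r hr
    by_contra hcon
    push_neg at hcon
    obtain ⟨n, rfl⟩ : ∃ n, r = n + 1 := ⟨r - 1, by omega⟩
    have hlr : e ≤ l (n + 1) := by omega
    have hre2 : (n + 1) * (e - 1) = n * (e - 1) + (e - 1) := by ring
    set m := l (n + 1) + n * (e - 1) with hm
    have hmem : (n + 1, l (n + 1)) ∈ ladder e m := by
      refine ⟨n, by omega, ?_⟩
      simp only [Prod.mk.injEq]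
      omega
    have hmem' : (n + 2, l (n + 1) - (e - 1)) ∈ ladder e m := by
      refine ⟨n + 1, by omega, ?_⟩
      simp only [Prod.mk.injEq]
      omega
    have hcell : (n + 1, l (n + 1)) ∈ cells l := ⟨by omega, by simp; omega, by simp⟩
    have := h m (by omega) (n + 1) (l (n + 1)) hmem hcell (n + 2) (l (n + 1) - (e - 1))
      hmem' (by omega)
    obtain ⟨_, _, h3⟩ := this
    simp only at h3
    have hcon' : l (n + 2) + e ≤ l (n + 1) := by
      have h22 : n + 1 + 1 = n + 2 := by omega
      rwa [h22] at hcon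
    omega

end KN
end

section
/- Let e ≥ 2 and let λ be a nonempty e-restricted partition. Let t_λ be the largest index m with λ ∩ L_m ≠ ∅, and let A be the node of λ ∩ L_{t_λ} with the smallest row index. Then λ∖{A} is the Young diagram of an e-restricted partition. (This makes the recursive definition of the ladder weight j^λ well defined.) -/
namespace KN

lemma mem_ladder_iff {e a b m : ℕ} (ha : 1 ≤ a) (hb : 1 ≤ b) :
    (a, b) ∈ ladder e m ↔ b + (a - 1) * (e - 1) = m := by
  constructor
  · rintro ⟨k, hk, hEq⟩
    rw [Prod.ext_iff] at hEq
    obtain ⟨h1, h2⟩ := hEq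
    simp only at h1 h2
    have hak : a - 1 = k := by omega
    rw [hak]
    omega
  · intro h
    refine ⟨a - 1, by omega, ?_⟩
    rw [Prod.ext_iff]
    constructor
    · simp; omega
    · simp; omega

/-- removing the node of `λ ∩ L_{t_λ}` with smallest row index from an
`e`-restricted partition yields (the diagram of) an `e`-restricted partition. -/
theorem remove_top_of_bottom_ladder
    (e : ℕ) (he : 2 ≤ e) (l : ℕ → ℕ) (hl : IsPartitionFun l)
    (hrestr : IsRestricted e l) (hne : (cells l).Nonempty)
    (t : ℕ) (ht : (cells l ∩ ladder e t).Nonempty)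
    (htmax : ∀ m, (cells l ∩ ladder e m).Nonempty → m ≤ t)
    (A : ℕ × ℕ) (hA : A ∈ cells l ∩ ladder e t)
    (hAtop : ∀ B ∈ cells l ∩ ladder e t, A.1 ≤ B.1) :
    ∃ l' : ℕ → ℕ, IsPartitionFun l' ∧ IsRestricted e l' ∧
      cells l' = cells l \ {A} := by
  obtain ⟨a, b⟩ := A
  obtain ⟨hcell, hlad⟩ := hA
  obtain ⟨ha1, hb1, hble⟩ := hcell
  simp only at ha1 hb1 hble
  have ht0 : b + (a - 1) * (e - 1) = t := (mem_ladder_iff ha1 hb1).mp hlad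
  have hbe : b = l a := by
    by_contra h
    have hc : (a, b + 1) ∈ cells l := ⟨ha1, by omega, show b + 1 ≤ l a by omega⟩
    have hll : (a, b + 1) ∈ ladder e (t + 1) :=
      (mem_ladder_iff ha1 (by omega)).mpr (by omega)
    have := htmax (t + 1) ⟨(a, b + 1), hc, hll⟩
    omega
  have hnext : l (a + 1) < b := by
    by_contra h
    push_neg at h
    have hc : (a + 1, b) ∈ cells l := ⟨by omega, hb1, show b ≤ l (a + 1) from h⟩
    have hll : (a + 1, b) ∈ ladder e (t + (e - 1)) := by
      apply (mem_ladder_iff (by omega) hb1).mpr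
      have h2 : a + 1 - 1 = (a - 1) + 1 := by omega
      rw [h2, add_mul, one_mul]
      omega
    have := htmax _ ⟨(a + 1, b), hc, hll⟩
    omega
  have hprev : 2 ≤ a → l (a - 1) + 2 ≤ b + e := by
    intro ha2
    have hr := hrestr (a - 1) (by omega)
    have hstep : a - 1 + 1 = a := by omega
    rw [hstep] at hr
    by_contra h
    push_neg at h
    have heq : l (a - 1) = b + e - 1 := by omega
    have hc : (a - 1, b + e - 1) ∈ cells l :=
      ⟨by omega, by omega, show b + e - 1 ≤ l (a - 1) by omega⟩
    have hll : (a - 1, b + e - 1) ∈ ladder e t := by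
      apply (mem_ladder_iff (by omega) (by omega)).mpr
      have h2 : a - 1 - 1 = a - 2 := by omega
      have h3 : (a - 2) * (e - 1) + (e - 1) = (a - 1) * (e - 1) := by
        have h4 : a - 1 = (a - 2) + 1 := by omega
        rw [h4, add_mul, one_mul]
      rw [h2]
      omega
    have := hAtop (a - 1, b + e - 1) ⟨hc, hll⟩
    simp only at this
    omega
  refine ⟨fun r => if r = a then b - 1 else l r, ⟨?_, ?_⟩, ?_, ?_⟩
  · intro r hr
    dsimp only
    by_cases h2 : r = a
    · rw [if_neg (show ¬r + 1 = a by omega), if_pos h2, h2]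
      omega
    · rw [if_neg h2]
      by_cases h1 : r + 1 = a
      · rw [if_pos h1]
        have h3 := hl.1 r hr
        rw [h1] at h3
        omega
      · rw [if_neg h1]
        exact hl.1 r hr
  · obtain ⟨N, hN⟩ := hl.2
    refine ⟨N, fun r hr => ?_⟩
    dsimp only
    have haN : a < N := by
      by_contra h
      have := hN a (by omega)
      omega
    rw [if_neg (by omega)]
    exact hN r hr
  · intro r hr
    dsimp only
    by_cases h1 : r = a
    · rw [if_pos h1, if_neg (by omega)]
      have := hrestr r hr
      rw [h1] at this ⊢
      omega
    · rw [if_neg h1]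
      by_cases h2 : r + 1 = a
      · rw [if_pos h2]
        have := hprev (by omega)
        have h3 : a - 1 = r := by omega
        rw [h3] at this
        omega
      · rw [if_neg h2]
        exact hrestr r hr
  · ext ⟨x, y⟩
    simp only [cells, Set.mem_setOf_eq, Set.mem_diff, Set.mem_singleton_iff,
      Prod.mk.injEq]
    by_cases h1 : x = a
    · rw [if_pos h1, h1]
      constructor
      · rintro ⟨hx, hy, hle⟩
        exact ⟨⟨hx, hy, by omega⟩, by omega⟩
      · rintro ⟨⟨hx, hy, hle⟩, hne2⟩
        refine ⟨hx, hy, ?_⟩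
        omega
    · rw [if_neg h1]
      constructor
      · rintro ⟨hx, hy, hle⟩
        exact ⟨⟨hx, hy, hle⟩, by omega⟩
      · rintro ⟨⟨hx, hy, hle⟩, _⟩
        exact ⟨hx, hy, hle⟩


end KN
end

section
/- Let e ≥ 2, let λ be an e-restricted partition of d and μ a partition of d with λ not ⊴ μ. Let (A_1,…,A_r) be the bottom removable sequence of λ and i ∈ ℤ/eℤ its residue, and write 𝑨 = {A_1,…,A_r}. If 𝑩 = {B_1,…,B_r} is any set of r removable nodes of μ all of residue i, then λ_𝑨 is not ⊴ μ_𝑩. -/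
namespace KN

lemma partfun_mono {l : ℕ → ℕ} (hl : IsPartitionFun l) {j j' : ℕ} (h1 : 1 ≤ j) (h : j ≤ j') :
    l j' ≤ l j := by
  induction j' with
  | zero => omega
  | succ n ih =>
    rcases Nat.lt_or_ge j (n+1) with hlt | hge
    · exact le_trans (hl.1 n (by omega)) (ih (by omega))
    · have : j = n + 1 := by omega
      simp [this]

lemma sigmaSet_cells (f : ℕ → ℕ) (k : ℕ) :
    sigmaSet (cells f) k = ∑ j ∈ Finset.Icc 1 k, f j := by
  have hset : cells f ∩ {p : ℕ × ℕ | p.1 ≤ k}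
      = ↑((Finset.Icc 1 k).biUnion (fun a => {a} ×ˢ Finset.Icc 1 (f a))) := by
    ext ⟨a, b⟩
    simp only [Set.mem_inter_iff, Set.mem_setOf_eq, cells, Finset.coe_biUnion,
      Set.mem_iUnion, Finset.mem_coe, Finset.mem_Icc, Finset.mem_product,
      Finset.mem_singleton, Finset.mem_biUnion]
    constructor
    · rintro ⟨⟨h1, h2, h3⟩, h4⟩; exact ⟨a, ⟨h1, h4⟩, rfl, h2, h3⟩
    · rintro ⟨x, ⟨hx1, hx2⟩, rfl, hb1, hb2⟩; exact ⟨⟨hx1, hb1, hb2⟩, hx2⟩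
  rw [sigmaSet, hset, Set.ncard_coe_finset, Finset.card_biUnion]
  · apply Finset.sum_congr rfl
    intro a _
    rw [Finset.card_product, Finset.card_singleton, Nat.card_Icc]
    omega
  · intro x _ y _ hxy
    simp only [Finset.disjoint_left, Finset.mem_product, Finset.mem_singleton]
    rintro ⟨a, b⟩ ⟨rfl, -⟩ ⟨rfl, -⟩
    exact hxy rfl

lemma sigmaSet_diff {S A : Set (ℕ × ℕ)} (hS : S.Finite) (hA : A ⊆ S) (k : ℕ) :
    sigmaSet (S \ A) k + (A ∩ {p | p.1 ≤ k}).ncard = sigmaSet S k := by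
  have hset : (S \ A) ∩ {p : ℕ × ℕ | p.1 ≤ k}
      = (S ∩ {p | p.1 ≤ k}) \ (A ∩ {p | p.1 ≤ k}) := by
    ext p; simp only [Set.mem_inter_iff, Set.mem_diff, Set.mem_setOf_eq]; tauto
  rw [sigmaSet, hset, sigmaSet]
  exact Set.ncard_diff_add_ncard_of_subset
    (Set.inter_subset_inter_left _ hA) (hS.inter_of_left _)

-- sum of f over Icc a b bounded below when f ≥ c on the range
lemma sum_ge_const {f : ℕ → ℕ} {a b c : ℕ} (h : ∀ j, a ≤ j → j ≤ b → c ≤ f j) (hab : a ≤ b + 1) :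
    (b + 1 - a) * c ≤ ∑ j ∈ Finset.Icc a b, f j := by
  calc (b + 1 - a) * c = ∑ _j ∈ Finset.Icc a b, c := by
        rw [Finset.sum_const, Nat.card_Icc, smul_eq_mul]
    _ ≤ ∑ j ∈ Finset.Icc a b, f j := by
        apply Finset.sum_le_sum
        intro j hj
        rw [Finset.mem_Icc] at hj
        exact h j hj.1 hj.2


lemma sum_ge_const' {f : ℕ → ℕ} {a b c : ℕ} (h : ∀ j, a < j → j ≤ b → c ≤ f j) :
    (b - a) * c ≤ ∑ j ∈ Finset.Ioc a b, f j := by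
  calc (b - a) * c = ∑ _j ∈ Finset.Ioc a b, c := by
        rw [Finset.sum_const, Nat.card_Ioc, smul_eq_mul]
    _ ≤ ∑ j ∈ Finset.Ioc a b, f j := by
        apply Finset.sum_le_sum
        intro j hj
        rw [Finset.mem_Ioc] at hj
        exact h j hj.1 hj.2

lemma removable_end {g : ℕ → ℕ} {p : ℕ × ℕ} (h : Removable (cells g) p) :
    1 ≤ p.1 ∧ 1 ≤ p.2 ∧ p.2 = g p.1 ∧ g (p.1 + 1) < g p.1 := by
  obtain ⟨hmem, hdiag⟩ := h
  obtain ⟨ha, hb, hble⟩ := hmem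
  have hpeta : (p.1, p.2) = p := rfl
  refine ⟨ha, hb, ?_, ?_⟩
  · by_contra hne
    have hlt : p.2 < g p.1 := lt_of_le_of_ne hble hne
    have hq : ((p.1, g p.1) : ℕ × ℕ) ∈ cells g \ {p} := by
      constructor
      · exact ⟨ha, by omega, le_refl _⟩
      · simp only [Set.mem_singleton_iff]
        intro hEq
        rw [← hpeta] at hEq
        have := congrArg Prod.snd hEq
        simp at this
        omega
    have := hdiag.2 p.1 (g p.1) p.1 p.2 hq ha (le_refl _) hb hble
    rw [hpeta] at this
    exact this.2 rfl
  · by_contra hge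
    push_neg at hge
    have hq : ((p.1 + 1, p.2) : ℕ × ℕ) ∈ cells g \ {p} := by
      constructor
      · exact ⟨by omega, hb, le_trans hble hge⟩
      · simp only [Set.mem_singleton_iff]
        intro hEq
        rw [← hpeta] at hEq
        have := congrArg Prod.fst hEq
        simp at this
    have := hdiag.2 (p.1 + 1) p.2 p.1 p.2 hq ha (by omega) hb (le_refl _)
    rw [hpeta] at this
    exact this.2 rfl


/-- the dominance lemma (Lemma 3.1). -/
theorem dominance_lemma
    (e d : ℕ) (he : 2 ≤ e) (l m : ℕ → ℕ)
    (hl : IsPartitionOf l d) (hm : IsPartitionOf m d)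
    (hrestr : IsRestricted e l)
    (hnotdom : ¬ DomLE (cells l) (cells m))
    (t : ℕ) (ht : (cells l ∩ ladder e t).Nonempty)
    (htmax : ∀ u, (cells l ∩ ladder e u).Nonempty → u ≤ t)
    (i : ZMod e) (hires : ∀ A ∈ cells l ∩ ladder e t, res e A = i)
    (B : Set (ℕ × ℕ)) (hBfin : B.Finite)
    (hBcard : B.ncard = (cells l ∩ ladder e t).ncard)
    (hBrem : ∀ p ∈ B, Removable (cells m) p)
    (hBres : ∀ p ∈ B, res e p = i) :
    ¬ DomLE (cells l \ (cells l ∩ ladder e t)) (cells m \ B) := by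
  haveI : NeZero e := ⟨by omega⟩
  intro hdom
  apply hnotdom
  obtain ⟨⟨hlmono', Nl, hNl⟩, hlfin, hlcard⟩ := hl
  obtain ⟨⟨hmmono', Nm, hNm⟩, hmfin, hmcard⟩ := hm
  have hlmono : ∀ j j', 1 ≤ j → j ≤ j' → l j' ≤ l j :=
    fun j j' h1 h2 => partfun_mono ⟨hlmono', Nl, hNl⟩ h1 h2
  have hmmono : ∀ j j', 1 ≤ j → j ≤ j' → m j' ≤ m j :=
    fun j j' h1 h2 => partfun_mono ⟨hmmono', Nm, hNm⟩ h1 h2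
  -- ladder bound for λ
  have hladmax : ∀ a, 1 ≤ a → 1 ≤ l a → l a + (a - 1) * (e - 1) ≤ t := by
    intro a h1 h2
    apply htmax
    refine ⟨(a, l a), ⟨⟨h1, h2, le_refl _⟩, ?_⟩⟩
    refine ⟨a - 1, by omega, ?_⟩
    have h3 : 1 + (a - 1) = a := by omega
    have h4 : l a + (a - 1) * (e - 1) - (a - 1) * (e - 1) = l a := by omega
    rw [h3, h4]
  -- k1 : the last nonzero row of λ
  obtain ⟨p0, hp0⟩ := ht
  have hp0c : p0 ∈ cells l := hp0.1
  have hp0row : 1 ≤ l p0.1 := le_trans hp0c.2.1 hp0c.2.2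
  have hk1ex : ∃ K, (1 ≤ K ∧ 1 ≤ l K) ∧ ∀ j, K < j → l j = 0 := by
    have hp0Nl : p0.1 ≤ Nl := by
      by_contra hgt
      have := hNl p0.1 (by omega)
      omega
    refine ⟨Nat.findGreatest (fun j => 1 ≤ l j) Nl, ⟨?_, ?_⟩, ?_⟩
    · exact le_trans hp0c.1 (Nat.le_findGreatest (P := fun j => 1 ≤ l j) hp0Nl hp0row)
    · exact Nat.findGreatest_spec (P := fun j => 1 ≤ l j) hp0Nl hp0row
    · intro j hj
      rcases le_or_gt j Nl with hle | hlt
      · have := Nat.findGreatest_is_greatest (P := fun j => 1 ≤ l j) hj hle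
        omega
      · exact hNl j (by omega)
  obtain ⟨k1, ⟨hk1pos, hk1P⟩, hk1max⟩ := hk1ex
  have hrow_le_k1 : ∀ j, 1 ≤ l j → j ≤ k1 := by
    intro j h
    by_contra hgt
    have := hk1max j (by omega)
    omega
  -- end-ladder monotonicity
  have hladstep : ∀ j, 1 ≤ j → 1 ≤ l (j + 1) →
      l j + (j - 1) * (e - 1) ≤ l (j + 1) + j * (e - 1) := by
    intro j h1 h2
    obtain ⟨j', rfl⟩ : ∃ j', j = j' + 1 := ⟨j - 1, by omega⟩
    have hr := hrestr (j' + 1) (by omega)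
    have hmul : (j' + 1) * (e - 1) = j' * (e - 1) + (e - 1) := by ring
    simp only [Nat.add_sub_cancel]
    omega
  have hchain : ∀ j j', 1 ≤ j → j ≤ j' → j' ≤ k1 →
      l j + (j - 1) * (e - 1) ≤ l j' + (j' - 1) * (e - 1) := by
    intro j j' h1 hjj' hj'k1
    induction j', hjj' using Nat.le_induction with
    | base => exact le_refl _
    | succ n hn ih =>
      have hnk1 : n ≤ k1 := by omega
      have h2 : 1 ≤ l (n + 1) := le_trans hk1P (hlmono (n + 1) k1 (by omega) hj'k1)
      calc l j + (j - 1) * (e - 1) ≤ l n + (n - 1) * (e - 1) := ih hnk1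
        _ ≤ l (n + 1) + n * (e - 1) := hladstep n (by omega) h2
        _ = l (n + 1) + ((n + 1) - 1) * (e - 1) := by simp
  -- value of t
  have hk1t : l k1 + (k1 - 1) * (e - 1) = t := by
    obtain ⟨κ, hκ1, hκ2⟩ := hp0.2
    have hfst : p0.1 = 1 + κ := by rw [hκ2]
    have hsnd : p0.2 = t - κ * (e - 1) := by rw [hκ2]
    have hla : t - κ * (e - 1) ≤ l (1 + κ) := by
      have h5 := hp0c.2.2
      rw [hsnd] at h5
      rw [hfst] at h5
      exact h5
    have hp02 := hp0c.2.1
    rw [hsnd] at hp02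
    have hll : 1 ≤ l (1 + κ) := by omega
    have hup := hladmax (1 + κ) (by omega) hll
    have h1κ : (1 + κ) - 1 = κ := by omega
    rw [h1κ] at hup
    have hk1' : 1 + κ ≤ k1 := hrow_le_k1 (1 + κ) hll
    have hch := hchain (1 + κ) k1 (by omega) hk1' (le_refl _)
    rw [h1κ] at hch
    have := hladmax k1 (by omega) hk1P
    omega
  -- k0 : first row of the top ladder
  have hk0ex : ∃ j, 1 ≤ j ∧ 1 ≤ l j ∧ l j + (j - 1) * (e - 1) = t :=
    ⟨k1, hk1pos, hk1P, hk1t⟩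
  obtain ⟨k0, ⟨hk0pos, hk0P, hk0t⟩, hk0min⟩ :
      ∃ K, (1 ≤ K ∧ 1 ≤ l K ∧ l K + (K - 1) * (e - 1) = t) ∧
        ∀ j, j < K → ¬(1 ≤ j ∧ 1 ≤ l j ∧ l j + (j - 1) * (e - 1) = t) :=
    ⟨Nat.find hk0ex, Nat.find_spec hk0ex, fun j hj => Nat.find_min hk0ex hj⟩
  have hk0k1 : k0 ≤ k1 := by
    by_contra hgt
    exact hk0min k1 (by omega) ⟨hk1pos, hk1P, hk1t⟩
  have hlvals : ∀ j, k0 ≤ j → j ≤ k1 → l j + (j - 1) * (e - 1) = t := by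
    intro j hj1 hj2
    have h1 : 1 ≤ l j := le_trans hk1P (hlmono j k1 (by omega) hj2)
    have hch := hchain k0 j (by omega) hj1 hj2
    have := hladmax j (by omega) h1
    omega
  -- A as a finset
  have hAeq : cells l ∩ ladder e t =
      ↑((Finset.Icc k0 k1).image (fun j => (j, l j))) := by
    ext ⟨a, b⟩
    simp only [Set.mem_inter_iff, Finset.coe_image, Set.mem_image, Finset.mem_coe,
      Finset.mem_Icc, cells, ladder, Set.mem_setOf_eq]
    constructor
    · rintro ⟨⟨ha1, hb1, hble⟩, ⟨κ, hκ1, hκ2⟩⟩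
      rw [Prod.ext_iff] at hκ2
      obtain ⟨hfst, hsnd⟩ := hκ2
      simp only at hfst hsnd hble hb1 ha1
      have hll : 1 ≤ l a := by omega
      have hup := hladmax a (by omega) hll
      have haκ : a - 1 = κ := by omega
      rw [haκ] at hup
      have hbla : b = l a := by omega
      have hlat : l a + κ * (e - 1) = t := by omega
      have hak1 : a ≤ k1 := hrow_le_k1 a hll
      have hak0 : k0 ≤ a := by
        by_contra hlt
        exact hk0min a (by omega) ⟨by omega, hll, by rw [haκ]; exact hlat⟩
      exact ⟨a, ⟨hak0, hak1⟩, by rw [hbla]⟩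
    · rintro ⟨j, ⟨hj1, hj2⟩, hj3⟩
      rw [Prod.ext_iff] at hj3
      obtain ⟨hfst, hsnd⟩ := hj3
      simp only at hfst hsnd
      subst hfst
      have hll : 1 ≤ l j := le_trans hk1P (hlmono j k1 (by omega) hj2)
      have hlt := hlvals j hj1 hj2
      constructor
      · exact ⟨by omega, by omega, by omega⟩
      · refine ⟨j - 1, by omega, ?_⟩
        have h3 : 1 + (j - 1) = j := by omega
        have h4 : t - (j - 1) * (e - 1) = b := by omega
        rw [h3, h4]
  have hinjl : Set.InjOn (fun j => (j, l j)) ↑(Finset.Icc k0 k1) := by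
    intro x _ y _ hxy
    exact congrArg Prod.fst hxy
  have hr : (cells l ∩ ladder e t).ncard = k1 + 1 - k0 := by
    rw [hAeq, Set.ncard_coe_finset, Finset.card_image_of_injOn hinjl, Nat.card_Icc]
  -- the count of A-nodes in rows ≤ K
  have hacount : ∀ K, ((cells l ∩ ladder e t) ∩ {p | p.1 ≤ K}).ncard
      = min K k1 + 1 - k0 := by
    intro K
    have hset : (cells l ∩ ladder e t) ∩ {p : ℕ × ℕ | p.1 ≤ K}
        = ↑((Finset.Icc k0 (min K k1)).image (fun j => (j, l j))) := by
      rw [hAeq]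
      ext ⟨a, b⟩
      simp only [Set.mem_inter_iff, Finset.coe_image, Set.mem_image, Finset.mem_coe,
        Finset.mem_Icc, Set.mem_setOf_eq]
      constructor
      · rintro ⟨⟨j, ⟨hj1, hj2⟩, hj3⟩, hK⟩
        have hfst : j = a := congrArg Prod.fst hj3
        refine ⟨j, ⟨hj1, ?_⟩, hj3⟩
        subst hfst
        omega
      · rintro ⟨j, ⟨hj1, hj2⟩, hj3⟩
        have hfst : j = a := congrArg Prod.fst hj3
        constructor
        · exact ⟨j, ⟨hj1, by omega⟩, hj3⟩
        · subst hfst; omega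
    rw [hset, Set.ncard_coe_finset, Finset.card_image_of_injOn, Nat.card_Icc]
    intro x _ y _ hxy
    exact congrArg Prod.fst hxy
  -- the width of the last row
  have hwe : l k1 ≤ e - 1 := by
    have hre := hrestr k1 (by omega)
    have := hk1max (k1 + 1) (by omega)
    omega
  -- the residue i
  have hik1 : ((l k1 : ZMod e) - (k1 : ZMod e)) = i := by
    have hmem : ((k1, l k1) : ℕ × ℕ) ∈ cells l ∩ ladder e t := by
      rw [hAeq]
      simp only [Finset.coe_image, Set.mem_image, Finset.mem_coe, Finset.mem_Icc]
      exact ⟨k1, ⟨hk0k1, le_refl _⟩, rfl⟩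
    have := hires _ hmem
    simpa [res] using this
  -- ==================== B structure ====================
  have hBend : ∀ p ∈ B, 1 ≤ p.1 ∧ 1 ≤ p.2 ∧ p.2 = m p.1 ∧ m (p.1 + 1) < m p.1 :=
    fun p hp => removable_end (hBrem p hp)
  have hBsub : B ⊆ cells m := fun p hp => (hBrem p hp).1
  classical
  set Rset : Finset ℕ := hBfin.toFinset.image Prod.fst with hRdef
  have hRmem : ∀ a, a ∈ Rset ↔ (a, m a) ∈ B := by
    intro a
    constructor
    · intro ha
      rw [hRdef, Finset.mem_image] at ha
      obtain ⟨p, hp, hpa⟩ := ha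
      rw [Set.Finite.mem_toFinset] at hp
      obtain ⟨-, -, h2, -⟩ := hBend p hp
      have : p = (a, m a) := by
        rw [Prod.ext_iff]
        exact ⟨hpa, by rw [h2, hpa]⟩
      rw [← this]
      exact hp
    · intro ha
      rw [hRdef, Finset.mem_image]
      exact ⟨(a, m a), by rw [Set.Finite.mem_toFinset]; exact ha, rfl⟩
  have hRrow : ∀ a ∈ Rset, 1 ≤ a ∧ 1 ≤ m a ∧ m (a + 1) < m a := by
    intro a ha
    obtain ⟨h1, h2, h3, h4⟩ := hBend (a, m a) ((hRmem a).1 ha)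
    exact ⟨h1, h2, h4⟩
  have hBeqR : B = ↑(Rset.image (fun a => (a, m a))) := by
    ext p
    simp only [Finset.coe_image, Set.mem_image, Finset.mem_coe]
    constructor
    · intro hp
      obtain ⟨-, -, h2, -⟩ := hBend p hp
      refine ⟨p.1, (hRmem p.1).2 ?_, ?_⟩
      · rw [show ((p.1, m p.1) : ℕ × ℕ) = p from by rw [Prod.ext_iff]; exact ⟨rfl, h2.symm⟩]
        exact hp
      · rw [Prod.ext_iff]; exact ⟨rfl, h2.symm⟩
    · rintro ⟨a, ha, rfl⟩
      exact (hRmem a).1 ha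
  have hinjm : ∀ s : Set ℕ, Set.InjOn (fun a => (a, m a)) s :=
    fun s x _ y _ hxy => congrArg Prod.fst hxy
  have hRcard : Rset.card = k1 + 1 - k0 := by
    have : B.ncard = Rset.card := by
      rw [hBeqR, Set.ncard_coe_finset, Finset.card_image_of_injOn (hinjm _)]
    rw [← this, hBcard, hr]
  have hbcount : ∀ K, (B ∩ {p | p.1 ≤ K}).ncard = (Rset.filter (fun a => a ≤ K)).card := by
    intro K
    have hset : B ∩ {p : ℕ × ℕ | p.1 ≤ K}
        = ↑((Rset.filter (fun a => a ≤ K)).image (fun a => (a, m a))) := by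
      rw [hBeqR]
      ext ⟨a, b⟩
      simp only [Set.mem_inter_iff, Finset.coe_image, Set.mem_image, Finset.mem_coe,
        Finset.mem_filter, Set.mem_setOf_eq]
      constructor
      · rintro ⟨⟨j, hj1, hj3⟩, hK⟩
        have hfst : j = a := congrArg Prod.fst hj3
        subst hfst
        exact ⟨j, ⟨hj1, hK⟩, hj3⟩
      · rintro ⟨j, ⟨hj1, hj2⟩, hj3⟩
        have hfst : j = a := congrArg Prod.fst hj3
        subst hfst
        exact ⟨⟨j, hj1, hj3⟩, hj2⟩
    rw [hset, Set.ncard_coe_finset, Finset.card_image_of_injOn (hinjm _)]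
  have hcolmono : ∀ a a', a ∈ Rset → a' ∈ Rset → a < a' → m a' < m a := by
    intro a a' ha ha' hlt
    obtain ⟨h1, -, h3⟩ := hRrow a ha
    have := hmmono (a + 1) a' (by omega) (by omega)
    omega
  have hstep : ∀ a, a ∈ Rset → (a + 1) ∈ Rset → m (a + 1) + (e - 1) ≤ m a := by
    intro a ha ha'
    have hres1 := hBres (a, m a) ((hRmem a).1 ha)
    have hres2 := hBres (a + 1, m (a + 1)) ((hRmem (a + 1)).1 ha')
    simp only [res] at hres1 hres2
    have hdrop : m (a + 1) < m a := hcolmono a (a + 1) ha ha' (by omega)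
    have hcast : ((m a + 1 : ℕ) : ZMod e) = ((m (a + 1) : ℕ) : ZMod e) := by
      push_cast
      rw [← hres2] at hres1
      push_cast at hres1
      linear_combination hres1
    have hmod : (m a + 1) ≡ (m (a + 1)) [MOD e] := (ZMod.natCast_eq_natCast_iff _ _ _).mp hcast
    have hdvd : e ∣ (m a + 1) - (m (a + 1)) :=
      (Nat.modEq_iff_dvd' (by omega)).mp hmod.symm
    have := Nat.le_of_dvd (by omega) hdvd
    omega
  -- ==================== sums ====================
  have hIccIoc : ∀ K : ℕ, Finset.Icc 1 K = Finset.Ioc 0 K := by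
    intro K; ext x; simp only [Finset.mem_Icc, Finset.mem_Ioc]; omega
  have hSL : ∀ K, sigmaSet (cells l) K = ∑ j ∈ Finset.Ioc 0 K, l j := by
    intro K; rw [sigmaSet_cells, hIccIoc]
  have hSM : ∀ K, sigmaSet (cells m) K = ∑ j ∈ Finset.Ioc 0 K, m j := by
    intro K; rw [sigmaSet_cells, hIccIoc]
  have hSLtot : ∑ j ∈ Finset.Ioc 0 k1, l j = d := by
    rw [← hSL, sigmaSet, Set.inter_eq_self_of_subset_left, hlcard]
    intro p hp
    have h1 : 1 ≤ l p.1 := le_trans hp.2.1 hp.2.2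
    exact hrow_le_k1 p.1 h1
  have hSMtot : ∀ K, ∑ j ∈ Finset.Ioc 0 K, m j ≤ d := by
    intro K
    have hsub : Finset.Ioc 0 K ⊆ Finset.Ioc 0 (max K Nm) :=
      Finset.Ioc_subset_Ioc_right (le_max_left _ _)
    have h1 : ∑ j ∈ Finset.Ioc 0 K, m j ≤ ∑ j ∈ Finset.Ioc 0 (max K Nm), m j :=
      Finset.sum_le_sum_of_subset hsub
    have h2 : ∑ j ∈ Finset.Ioc 0 (max K Nm), m j = d := by
      rw [← hSM, sigmaSet, Set.inter_eq_self_of_subset_left, hmcard]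
      intro p hp
      show p.1 ≤ max K Nm
      by_contra hgt
      have h3 := hNm p.1 (by omega)
      have h4 : (1:ℕ) ≤ m p.1 := le_trans hp.2.1 hp.2.2
      omega
    omega
  -- the master inequality from hdom
  have hH : ∀ K, (∑ j ∈ Finset.Ioc 0 K, l j) + (Rset.filter (fun a => a ≤ K)).card
      ≤ (∑ j ∈ Finset.Ioc 0 K, m j) + (min K k1 + 1 - k0) := by
    intro K
    have h1 := sigmaSet_diff (A := cells l ∩ ladder e t) hlfin Set.inter_subset_left K
    have h2 := sigmaSet_diff hmfin hBsub K
    have h3 := hdom K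
    rw [hacount, hSL] at h1
    rw [hbcount, hSM] at h2
    omega
  have hsplitk : ∀ K, (Rset.filter (fun a => a ≤ K)).card
      + (Rset.filter (fun a => ¬ a ≤ K)).card = Rset.card :=
    fun K => Finset.card_filter_add_card_filter_not _
  -- tail bound from hH at k1
  have htail : ∀ ρ, k1 ≤ ρ →
      (∑ j ∈ Finset.Ioc k1 ρ, m j) ≤ (Rset.filter (fun a => ¬ a ≤ k1)).card := by
    intro ρ hρ
    have hHk1 := hH k1
    rw [min_self] at hHk1
    have hsum := Finset.sum_Ioc_consecutive m (Nat.zero_le k1) hρ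
    have htot := hSMtot ρ
    have hsplit := hsplitk k1
    omega
  -- at most one B-row below k1
  have hq1 : (Rset.filter (fun a => ¬ a ≤ k1)).card ≤ 1 := by
    by_contra hq2
    rw [Nat.not_le] at hq2
    set Rdeep := Rset.filter (fun a => ¬ a ≤ k1) with hRdeepdef
    have hne : Rdeep.Nonempty := Finset.card_pos.mp (by omega)
    set ρq := Rdeep.max' hne with hρqdef
    have hρqmem : ρq ∈ Rdeep := Finset.max'_mem _ _
    have hne2 : (Rdeep.erase ρq).Nonempty := by
      apply Finset.card_pos.mp
      rw [Finset.card_erase_of_mem hρqmem]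
      omega
    set ρq' := (Rdeep.erase ρq).max' hne2 with hρq'def
    have hρq'mem : ρq' ∈ Rdeep.erase ρq := Finset.max'_mem _ _
    have hρq'in : ρq' ∈ Rdeep := Finset.mem_of_mem_erase hρq'mem
    have hρq'ne : ρq' ≠ ρq := Finset.ne_of_mem_erase hρq'mem
    have hρq'lt : ρq' < ρq := lt_of_le_of_ne (Finset.le_max' _ _ hρq'in) hρq'ne
    have hmemR : ∀ x ∈ Rdeep, x ∈ Rset ∧ k1 < x := by
      intro x hx
      rw [hRdeepdef, Finset.mem_filter] at hx
      exact ⟨hx.1, by omega⟩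
    obtain ⟨hρqR, hρqgt⟩ := hmemR ρq hρqmem
    obtain ⟨hρq'R, hρq'gt⟩ := hmemR ρq' hρq'in
    have hsub1 : Rdeep ⊆ Finset.Icc (k1 + 1) ρq := by
      intro x hx
      obtain ⟨-, h2⟩ := hmemR x hx
      rw [Finset.mem_Icc]
      exact ⟨by omega, Finset.le_max' _ _ hx⟩
    have hcard1 : Rdeep.card ≤ ρq - k1 := by
      have := Finset.card_le_card hsub1
      rw [Nat.card_Icc] at this
      omega
    have hsub2 : Rdeep.erase ρq ⊆ Finset.Icc (k1 + 1) ρq' := by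
      intro x hx
      obtain ⟨-, h2⟩ := hmemR x (Finset.mem_of_mem_erase hx)
      rw [Finset.mem_Icc]
      exact ⟨by omega, Finset.le_max' _ _ hx⟩
    have hcard2 : Rdeep.card - 1 ≤ ρq' - k1 := by
      have := Finset.card_le_card hsub2
      rw [Nat.card_Icc, Finset.card_erase_of_mem hρqmem] at this
      omega
    have hm1 : 1 ≤ m ρq := (hRrow ρq hρqR).2.1
    have hm2 : m ρq + 1 ≤ m ρq' := by
      have := hcolmono ρq' ρq hρq'R hρqR hρq'lt
      omega
    have hsumsplit := Finset.sum_Ioc_consecutive m (le_of_lt hρq'gt) (le_of_lt hρq'lt)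
    have hlow1 : (ρq' - k1) * 2 ≤ ∑ j ∈ Finset.Ioc k1 ρq', m j := by
      apply sum_ge_const'
      intro j hj1 hj2
      have := hmmono j ρq' (by omega) hj2
      omega
    have hlow2 : (ρq - ρq') * 1 ≤ ∑ j ∈ Finset.Ioc ρq' ρq, m j := by
      apply sum_ge_const'
      intro j hj1 hj2
      have := hmmono j ρq (by omega) hj2
      omega
    have := htail ρq (by omega)
    omega
  -- ==================== main argument ====================
  intro k
  by_contra hbad0
  push_neg at hbad0
  rw [hSL, hSM] at hbad0
  have hHk := hH k
  have hsplitkk := hsplitk k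
  have hminle1 : min k k1 ≤ k := min_le_left _ _
  have hminle2 : min k k1 ≤ k1 := min_le_right _ _
  have hk0k : k0 ≤ k := by
    by_contra hlt
    have hmin0 : min k k1 + 1 - k0 = 0 := by omega
    omega
  have hkk1 : k ≤ k1 := by
    by_contra hgt
    push_neg at hgt
    have hminq : min k k1 = k1 := by omega
    have hfil : Rset.filter (fun a => ¬ a ≤ k) ⊆ Rset.filter (fun a => ¬ a ≤ k1) := by
      intro x hx
      rw [Finset.mem_filter] at hx ⊢
      exact ⟨hx.1, by omega⟩
    have hmcle : (Rset.filter (fun a => ¬ a ≤ k)).card ≤ 1 :=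
      le_trans (Finset.card_le_card hfil) hq1
    have hmcge : 1 ≤ (Rset.filter (fun a => ¬ a ≤ k)).card := by
      rw [hminq] at hHk
      omega
    obtain ⟨ρ, hρ⟩ := Finset.card_pos.mp (by omega :
      0 < (Rset.filter (fun a => ¬ a ≤ k)).card)
    rw [Finset.mem_filter] at hρ
    have hmρ : 1 ≤ m ρ := (hRrow ρ hρ.1).2.1
    have hρR : ρ ∈ Rset.filter (fun a => ¬ a ≤ k1) := by
      rw [Finset.mem_filter]
      exact ⟨hρ.1, by omega⟩
    have hlow : (ρ - k1) * 1 ≤ ∑ j ∈ Finset.Ioc k1 ρ, m j := by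
      apply sum_ge_const'
      intro j hj1 hj2
      have := hmmono j ρ (by omega) hj2
      omega
    have := htail ρ (by omega)
    omega
  have hminkk : min k k1 = k := by omega
  rw [hminkk] at hHk
  -- at least k1 - k + 1 B-rows above k
  have hmcge : k1 - k + 1 ≤ (Rset.filter (fun a => ¬ a ≤ k)).card := by omega
  -- split: middle rows and deep rows
  have hmidsplit : ((Rset.filter (fun a => ¬ a ≤ k)).filter (fun a => a ≤ k1)).card
      + ((Rset.filter (fun a => ¬ a ≤ k)).filter (fun a => ¬ a ≤ k1)).card
      = (Rset.filter (fun a => ¬ a ≤ k)).card :=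
    Finset.card_filter_add_card_filter_not _
  have hdeepeq : (Rset.filter (fun a => ¬ a ≤ k)).filter (fun a => ¬ a ≤ k1)
      = Rset.filter (fun a => ¬ a ≤ k1) := by
    ext x
    simp only [Finset.mem_filter]
    constructor
    · rintro ⟨⟨h1, h2⟩, h3⟩
      exact ⟨h1, h3⟩
    · rintro ⟨h1, h3⟩
      exact ⟨⟨h1, by omega⟩, h3⟩
  have hmidsub : (Rset.filter (fun a => ¬ a ≤ k)).filter (fun a => a ≤ k1)
      ⊆ Finset.Ioc k k1 := by
    intro x hx
    simp only [Finset.mem_filter] at hx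
    rw [Finset.mem_Ioc]
    omega
  have hmidcard : ((Rset.filter (fun a => ¬ a ≤ k)).filter (fun a => a ≤ k1)).card
      ≤ k1 - k := by
    have := Finset.card_le_card hmidsub
    rw [Nat.card_Ioc] at this
    exact this
  rw [hdeepeq] at hmidsplit
  have hqeq : (Rset.filter (fun a => ¬ a ≤ k1)).card = 1 := by omega
  -- the unique deep row is k1+1, with column 1
  obtain ⟨ρs, hρs⟩ := Finset.card_eq_one.mp hqeq
  have hρsmem : ρs ∈ Rset.filter (fun a => ¬ a ≤ k1) := by
    rw [hρs]
    exact Finset.mem_singleton_self _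
  rw [Finset.mem_filter] at hρsmem
  have hρsR : ρs ∈ Rset := hρsmem.1
  have hρsgt : k1 < ρs := by
    have := hρsmem.2
    omega
  have hmρs : 1 ≤ m ρs := (hRrow ρs hρsR).2.1
  have htailρs := htail ρs (by omega)
  rw [hqeq] at htailρs
  have hlowρs : (ρs - k1) * 1 ≤ ∑ j ∈ Finset.Ioc k1 ρs, m j := by
    apply sum_ge_const'
    intro j hj1 hj2
    have := hmmono j ρs (by omega) hj2
    omega
  have hρseq : ρs = k1 + 1 := by omega
  subst hρseq
  have hmdeep : m (k1 + 1) = 1 := by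
    have hsingle : m (k1 + 1) ≤ ∑ j ∈ Finset.Ioc k1 (k1 + 1), m j :=
      Finset.single_le_sum (fun i _ => Nat.zero_le _) (by rw [Finset.mem_Ioc]; omega)
    omega
  -- residue contradiction
  have hresdeep := hBres (k1 + 1, m (k1 + 1)) ((hRmem (k1 + 1)).1 hρsR)
  rw [hmdeep] at hresdeep
  simp only [res] at hresdeep
  have hzero : ((l k1 : ℕ) : ZMod e) = 0 := by
    rw [← hik1] at hresdeep
    push_cast at hresdeep
    linear_combination -hresdeep
  have hdvd := (ZMod.natCast_eq_zero_iff _ _).mp hzero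
  have := Nat.le_of_dvd (by omega) hdvd
  omega

end KN
end

section
/- Let e ≥ 2, let λ be an e-restricted partition of d and μ a partition of d with μ not ⊵ λ. Then there is no standard μ-tableau T with residue sequence i^T equal to the ladder weight j^λ. -/
namespace KN

/-! ### Auxiliary machinery -/

/-- ladder index of a node -/
def uIdx (e : ℕ) (p : ℕ × ℕ) : ℕ := p.2 + (p.1 - 1) * (e - 1)

lemma mem_ladder_iff_s4 {e : ℕ} {u : ℕ} {p : ℕ × ℕ} :
    p ∈ ladder e u ↔ 1 ≤ p.1 ∧ 1 ≤ p.2 ∧ uIdx e p = u := by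
  obtain ⟨a, b⟩ := p
  constructor
  · rintro ⟨k, hk, heq⟩
    rw [Prod.mk.injEq] at heq
    obtain ⟨rfl, rfl⟩ := heq
    have hk1 : 1 + k - 1 = k := by omega
    refine ⟨by omega, by omega, ?_⟩
    simp only [uIdx, hk1]
    omega
  · rintro ⟨h1, h2, rfl⟩
    simp only [uIdx]
    refine ⟨a - 1, ?_, ?_⟩
    · generalize (a - 1) * (e - 1) = c
      omega
    · rw [Prod.mk.injEq]
      constructor
      · omega
      · generalize (a - 1) * (e - 1) = c
        omega

/-- number of nodes of the ladder L_u -/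
noncomputable def hgt (e u : ℕ) : ℕ := sInf {k | u ≤ k * (e - 1)}

lemma lt_hgt_iff {e : ℕ} (he : 2 ≤ e) {k u : ℕ} : k < hgt e u ↔ k * (e - 1) < u := by
  have hne : {k | u ≤ k * (e - 1)}.Nonempty :=
    ⟨u, Nat.le_mul_of_pos_right u (by omega)⟩
  have hmem : u ≤ hgt e u * (e - 1) := Nat.sInf_mem hne
  constructor
  · intro h
    by_contra hc
    have h2 : hgt e u ≤ k := Nat.sInf_le (show u ≤ k * (e - 1) by omega)
    omega
  · intro h
    by_contra hc
    push_neg at hc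
    have : hgt e u * (e - 1) ≤ k * (e - 1) := Nat.mul_le_mul_right _ hc
    omega

lemma hgt_mono {e : ℕ} (he : 2 ≤ e) {u u' : ℕ} (h : u ≤ u') : hgt e u ≤ hgt e u' := by
  by_contra hc
  have := (lt_hgt_iff he).mpr (lt_of_lt_of_le ((lt_hgt_iff he).mp (by omega : hgt e u' < hgt e u)) h)
  omega

lemma row_lt_hgt {e : ℕ} (he : 2 ≤ e) {p : ℕ × ℕ} (h2 : 1 ≤ p.2) :
    p.1 - 1 < hgt e (uIdx e p) := by
  rw [lt_hgt_iff he]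
  simp only [uIdx]
  generalize (p.1 - 1) * (e - 1) = c
  omega

lemma one_le_uIdx {e : ℕ} {p : ℕ × ℕ} (h2 : 1 ≤ p.2) : 1 ≤ uIdx e p :=
  le_trans h2 (Nat.le_add_right _ _)

lemma res_eq_uIdx {e : ℕ} (he : 2 ≤ e) {p : ℕ × ℕ} (h1 : 1 ≤ p.1) (h2 : 1 ≤ p.2) :
    res e p = ((uIdx e p - 1 : ℕ) : ZMod e) := by
  have h : uIdx e p - 1 = (p.2 - 1) + (p.1 - 1) * (e - 1) := by
    simp only [uIdx]
    generalize (p.1 - 1) * (e - 1) = c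
    omega
  rw [h, res]
  push_cast
  have h2' : ((p.2 - 1 : ℕ) : ZMod e) = (p.2 : ZMod e) - 1 := by
    rw [Nat.cast_sub h2]; simp
  have h1' : ((p.1 - 1 : ℕ) : ZMod e) = (p.1 : ZMod e) - 1 := by
    rw [Nat.cast_sub h1]; simp
  have he' : ((e - 1 : ℕ) : ZMod e) = -1 := by
    rw [Nat.cast_sub (by omega : 1 ≤ e)]; simp
  rw [h2', h1', he']
  ring

lemma cong_le {e u w : ℕ} (he : 2 ≤ e) (h1 : 1 ≤ u) (h2 : 1 ≤ w)
    (hcong : ((u - 1 : ℕ) : ZMod e) = ((w - 1 : ℕ) : ZMod e)) (hle : u ≤ w + (e - 1)) :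
    u ≤ w := by
  by_contra hc
  have hmod : (u - 1) % e = (w - 1) % e := by
    rwa [ZMod.natCast_eq_natCast_iff, Nat.ModEq] at hcong
  have hdvd : e ∣ (u - 1) - (w - 1) := (Nat.modEq_iff_dvd' (by omega)).mp hmod.symm
  have := Nat.le_of_dvd (by omega) hdvd
  omega

/-- if `μ` does not dominate `λ`, no standard `μ`-tableau has residue
sequence equal to the ladder weight `j^λ`. -/
theorem no_ladder_tableau_when_not_dominated
    (e d : ℕ) (he : 2 ≤ e) (l m : ℕ → ℕ)
    (hl : IsPartitionOf l d) (hm : IsPartitionOf m d)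
    (hrestr : IsRestricted e l)
    (hnotdom : ¬ DomLE (cells l) (cells m)) :
    ¬ ∃ T : ℕ × ℕ → ℕ, IsStandardTableau (cells m) d T ∧
        ∀ p ∈ cells m, res e p = ladderWeight e l (T p) := by
  classical
  rintro ⟨T, ⟨hT1, hT2, hT3, hT4, hT5⟩, hres⟩
  obtain ⟨hlpf, hlfin, hlcard⟩ := hl
  obtain ⟨hmpf, hmfin, hmcard⟩ := hm
  set Fl := hlfin.toFinset with hFl
  set Fm := hmfin.toFinset with hFm
  have hmemFl : ∀ p, p ∈ Fl ↔ p ∈ cells l := fun p => hlfin.mem_toFinset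
  have hmemFm : ∀ p, p ∈ Fm ↔ p ∈ cells m := fun p => hmfin.mem_toFinset
  have hcellsp : ∀ (f : ℕ → ℕ) (a b : ℕ), (a, b) ∈ cells f ↔ 1 ≤ a ∧ 1 ≤ b ∧ b ≤ f a :=
    fun f a b => Iff.rfl
  have hcells : ∀ (f : ℕ → ℕ) (p : ℕ × ℕ), p ∈ cells f ↔ 1 ≤ p.1 ∧ 1 ≤ p.2 ∧ p.2 ≤ f p.1 :=
    fun f p => Iff.rfl
  have hFlcard : Fl.card = d := by
    rw [← hlcard]
    exact (Set.ncard_eq_toFinset_card (cells l) hlfin).symm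
  have hFmcard : Fm.card = d := by
    rw [← hmcard]
    exact (Set.ncard_eq_toFinset_card (cells m) hmfin).symm
  set blk : ℕ → ℕ := fun s => sInf {w : ℕ | s ≤ Rlad e l w} with hblkdef
  have hLW : ∀ s, ladderWeight e l s = ((blk s - 1 : ℕ) : ZMod e) := fun s => rfl
  set Mx := Fl.sup (uIdx e) with hMxdef
  set r : ℕ → ℕ := fun w => (Fl.filter fun p => uIdx e p = w).card with hrdef
  -- Rlad as a card
  have hR : ∀ M, Rlad e l M = (Fl.filter fun p => uIdx e p ≤ M).card := by
    intro M
    have h1 : ∀ u, (cells l ∩ ladder e u).ncard = r u := by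
      intro u
      have hset : cells l ∩ ladder e u = ↑(Fl.filter fun p => uIdx e p = u) := by
        ext p
        simp only [Set.mem_inter_iff, Finset.coe_filter, Set.mem_setOf_eq, hmemFl,
          mem_ladder_iff_s4]
        constructor
        · rintro ⟨hp, _, _, h⟩; exact ⟨hp, h⟩
        · rintro ⟨hp, h⟩
          exact ⟨hp, ((hcells l p).mp hp).1, ((hcells l p).mp hp).2.1, h⟩
      rw [hset, Set.ncard_coe_finset, hrdef]
    have hmaps : ∀ p ∈ Fl.filter fun p => uIdx e p ≤ M, uIdx e p ∈ Finset.Icc 1 M := by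
      intro p hp
      rw [Finset.mem_filter, hmemFl] at hp
      have h2 := ((hcells l p).mp hp.1).2.1
      rw [Finset.mem_Icc]
      exact ⟨le_trans h2 (Nat.le_add_right _ _), hp.2⟩
    rw [show Rlad e l M = ∑ u ∈ Finset.Icc 1 M, (cells l ∩ ladder e u).ncard from rfl,
      Finset.card_eq_sum_card_fiberwise hmaps]
    apply Finset.sum_congr rfl
    intro u hu
    rw [h1 u]
    show (Fl.filter fun p => uIdx e p = u).card = _
    congr 1
    ext p
    rw [Finset.mem_Icc] at hu
    simp only [Finset.mem_filter]
    constructor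
    · rintro ⟨hp, h⟩; exact ⟨⟨hp, by omega⟩, h⟩
    · rintro ⟨⟨hp, _⟩, h⟩; exact ⟨hp, h⟩
  have hRmono : ∀ {M M'}, M ≤ M' → Rlad e l M ≤ Rlad e l M' := by
    intro M M' hMM'
    rw [hR, hR]
    apply Finset.card_le_card
    intro p hp
    rw [Finset.mem_filter] at hp ⊢
    exact ⟨hp.1, le_trans hp.2 hMM'⟩
  have hR0 : Rlad e l 0 = 0 := by
    rw [show Rlad e l 0 = ∑ u ∈ Finset.Icc 1 0, (cells l ∩ ladder e u).ncard from rfl]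
    simp
  have hRMx : Rlad e l Mx = d := by
    rw [hR, ← hFlcard]
    congr 1
    apply Finset.filter_true_of_mem
    intro p hp
    exact Finset.le_sup hp
  have hRd : ∀ {M}, Rlad e l M ≤ d := by
    intro M
    rw [hR, ← hFlcard]
    exact Finset.card_filter_le _ _
  -- blk facts
  have hblk_mem : ∀ s, s ≤ d → s ≤ Rlad e l (blk s) := by
    intro s hs
    exact Nat.sInf_mem (⟨Mx, show s ≤ Rlad e l Mx by rw [hRMx]; exact hs⟩ :
      Set.Nonempty {w : ℕ | s ≤ Rlad e l w})
  have hblk_leMx : ∀ s, s ≤ d → blk s ≤ Mx := by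
    intro s hs
    exact Nat.sInf_le (show s ≤ Rlad e l Mx by rw [hRMx]; exact hs)
  have hblk_pos : ∀ s, 1 ≤ s → s ≤ d → 1 ≤ blk s := by
    intro s h1 h2
    by_contra hc
    have h0 : blk s = 0 := by omega
    have := hblk_mem s h2
    rw [h0, hR0] at this
    omega
  have hblk_lt : ∀ s, 1 ≤ s → s ≤ d → Rlad e l (blk s - 1) < s := by
    intro s h1 h2
    by_contra hc
    push_neg at hc
    have h3 : blk s ≤ blk s - 1 := Nat.sInf_le hc
    have := hblk_pos s h1 h2
    omega
  have hblk_mono : ∀ s s', s ≤ s' → s' ≤ d → blk s ≤ blk s' := by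
    intro s s' hss' hs'd
    exact Nat.sInf_le (show s ≤ Rlad e l (blk s') from le_trans hss' (hblk_mem s' hs'd))
  have hblk_eq : ∀ s w, 1 ≤ s → 1 ≤ w → Rlad e l (w - 1) < s → s ≤ Rlad e l w → blk s = w := by
    intro s w h1 hw1 hlt hle
    have hub : blk s ≤ w := Nat.sInf_le hle
    have hsd : s ≤ d := le_trans hle hRd
    have hlb : w ≤ blk s := by
      by_contra hc
      push_neg at hc
      have h3 : Rlad e l (blk s) ≤ Rlad e l (w - 1) := hRmono (by omega)
      have := hblk_mem s hsd
      omega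
    omega
  -- residue congruence
  have hcong : ∀ p ∈ cells m, ((uIdx e p - 1 : ℕ) : ZMod e) = ((blk (T p) - 1 : ℕ) : ZMod e) := by
    intro p hp
    rw [← res_eq_uIdx he ((hcells m p).mp hp).1 ((hcells m p).mp hp).2.1, hres p hp, hLW]
  -- key lemma: ladder index bounded by block
  have hkey : ∀ s, ∀ p ∈ cells m, T p ≤ s → uIdx e p ≤ blk (T p) := by
    intro s
    induction s with
    | zero => exact fun p hp h => absurd h (by have := (hT1 p hp).1; omega)
    | succ n ih =>
      intro p hp hps
      rcases Nat.lt_or_ge (T p) (n + 1) with h | h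
      · exact ih p hp (by omega)
      · obtain ⟨a, b⟩ := p
        obtain ⟨ha1, hb1, hbm⟩ := (hcellsp m a b).mp hp
        have hTd := hT1 _ hp
        have hwpos : 1 ≤ blk (T (a, b)) := hblk_pos _ hTd.1 hTd.2
        apply cong_le he (one_le_uIdx hb1) hwpos (hcong _ hp)
        rcases Nat.lt_or_ge b 2 with hb | hb
        · rcases Nat.lt_or_ge a 2 with ha | ha
          · obtain rfl : a = 1 := by omega
            obtain rfl : b = 1 := by omega
            have hu1 : uIdx e (1, 1) = 1 := by simp [uIdx]
            omega
          · have hq : (a - 1, b) ∈ cells m := by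
              refine (hcellsp m _ _).mpr ⟨by omega, hb1, ?_⟩
              have h5 := hmpf.1 (a - 1) (by omega)
              rw [show a - 1 + 1 = a from by omega] at h5
              exact le_trans hbm h5
            have hTlt : T (a - 1, b) < T (a, b) := by
              have h6 := hT5 (a - 1) b hq
                (by rw [show a - 1 + 1 = a from by omega]; exact hp)
              rwa [show a - 1 + 1 = a from by omega] at h6
            have hih := ih _ hq (by omega)
            have hmono := hblk_mono _ _ (le_of_lt hTlt) hTd.2
            have huq : uIdx e (a, b) = uIdx e (a - 1, b) + (e - 1) := by
              simp only [uIdx]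
              obtain ⟨t, rfl⟩ : ∃ t, a = t + 2 := ⟨a - 2, by omega⟩
              show b + (t + 1) * (e - 1) = b + t * (e - 1) + (e - 1)
              ring
            omega
        · have hq : (a, b - 1) ∈ cells m := (hcellsp m _ _).mpr ⟨ha1, by omega, by omega⟩
          have hTlt : T (a, b - 1) < T (a, b) := by
            have h6 := hT4 a (b - 1) hq
              (by rw [show b - 1 + 1 = b from by omega]; exact hp)
            rwa [show b - 1 + 1 = b from by omega] at h6
          have hih := ih _ hq (by omega)
          have hmono := hblk_mono _ _ (le_of_lt hTlt) hTd.2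
          have huq : uIdx e (a, b) = uIdx e (a, b - 1) + 1 := by
            simp only [uIdx]
            generalize (a - 1) * (e - 1) = c
            omega
          omega
  -- T is monotone along rows
  have hrowmono : ∀ j a b, 1 ≤ b → (a, b + j) ∈ cells m → T (a, b) ≤ T (a, b + j) := by
    intro j
    induction j with
    | zero => intro a b _ _; exact le_rfl
    | succ n ih =>
      intro a b hb hmem
      obtain ⟨ha1, hb1, hbm⟩ := (hcellsp m _ _).mp hmem
      have hmem' : (a, b + n) ∈ cells m := (hcellsp m _ _).mpr ⟨ha1, by omega, by omega⟩
      exact le_trans (ih a b hb hmem') (le_of_lt (hT4 a (b + n) hmem' hmem))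
  -- distinct rows within a block
  have hdist : ∀ p ∈ cells m, ∀ q ∈ cells m, p.1 = q.1 → blk (T p) = blk (T q) → p = q := by
    have hhalf : ∀ a b b', b < b' → (a, b) ∈ cells m → (a, b') ∈ cells m →
        blk (T (a, b)) = blk (T (a, b')) → False := by
      intro a b b' hbb' hpm hqm hblkeq
      obtain ⟨ha1, hb1', hbm'⟩ := (hcellsp m _ _).mp hqm
      have hc : (a, b + 1) ∈ cells m := (hcellsp m _ _).mpr ⟨ha1, by omega, by omega⟩
      have h1 : T (a, b) < T (a, b + 1) := hT4 a b hpm hc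
      have h2 : T (a, b + 1) ≤ T (a, b') := by
        have h7 := hrowmono (b' - (b + 1)) a (b + 1) (by omega)
          (by rw [show b + 1 + (b' - (b + 1)) = b' from by omega]; exact hqm)
        rwa [show b + 1 + (b' - (b + 1)) = b' from by omega] at h7
      have hTd' := hT1 _ hqm
      have hblkc : blk (T (a, b + 1)) = blk (T (a, b)) := by
        have hA := hblk_mono _ _ (le_of_lt h1) (le_trans h2 hTd'.2)
        have hB := hblk_mono _ _ h2 hTd'.2
        omega
      have hr1 := hcong _ hpm
      have hr2 := hcong _ hc
      have hu1 : 1 ≤ uIdx e (a, b) := le_trans ((hcellsp m _ _).mp hpm).2.1 (Nat.le_add_right _ _)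
      have huc : uIdx e (a, b + 1) = uIdx e (a, b) + 1 := by
        simp only [uIdx]
        generalize (a - 1) * (e - 1) = c
        omega
      rw [hblkc, ← hr1, huc, Nat.add_sub_cancel] at hr2
      have hmod := (ZMod.natCast_eq_natCast_iff _ _ _).mp hr2
      have hdvd : e ∣ uIdx e (a, b) - (uIdx e (a, b) - 1) :=
        (Nat.modEq_iff_dvd' (by omega)).mp hmod.symm
      have := Nat.le_of_dvd (by omega) hdvd
      omega
    intro p hp q hq hrow hblkeq
    obtain ⟨a, b⟩ := p
    obtain ⟨a', b'⟩ := q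
    obtain rfl : a = a' := hrow
    rcases Nat.lt_trichotomy b b' with h | h | h
    · exact (hhalf a b b' h hp hq hblkeq).elim
    · rw [h]
    · exact (hhalf a b' b h hq hp hblkeq.symm).elim
  -- splitting Rlad
  have hsplit : ∀ w, 1 ≤ w → Rlad e l w = Rlad e l (w - 1) + r w := by
    intro w hw
    have h1 : (Fl.filter fun p => uIdx e p ≤ w).filter (fun p => uIdx e p ≤ w - 1)
        = Fl.filter fun p => uIdx e p ≤ w - 1 := by
      ext p
      simp only [Finset.mem_filter]
      constructor
      · rintro ⟨⟨hp, _⟩, h⟩; exact ⟨hp, h⟩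
      · rintro ⟨hp, h⟩; exact ⟨⟨hp, by omega⟩, h⟩
    have h2 : (Fl.filter fun p => uIdx e p ≤ w).filter (fun p => ¬ uIdx e p ≤ w - 1)
        = Fl.filter fun p => uIdx e p = w := by
      ext p
      simp only [Finset.mem_filter]
      constructor
      · rintro ⟨⟨hp1, hp2⟩, h⟩; exact ⟨hp1, by omega⟩
      · rintro ⟨hp, h⟩; exact ⟨⟨hp, by omega⟩, by omega⟩
    have h3 := Finset.card_filter_add_card_filter_not
      (s := Fl.filter fun p => uIdx e p ≤ w) (p := fun p => uIdx e p ≤ w - 1)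
    rw [h1, h2] at h3
    rw [hR, hR]
    show (Fl.filter fun p => uIdx e p ≤ w).card
        = (Fl.filter fun p => uIdx e p ≤ w - 1).card + (Fl.filter fun p => uIdx e p = w).card
    omega
  -- main inequality
  have hDom : DomLE (cells l) (cells m) := by
    intro k
    have hσl : sigmaSet (cells l) k = (Fl.filter fun p => p.1 ≤ k).card := by
      have hset : cells l ∩ {p | p.1 ≤ k} = ↑(Fl.filter fun p => p.1 ≤ k) := by
        ext p
        simp only [Set.mem_inter_iff, Set.mem_setOf_eq, Finset.coe_filter, hmemFl]
      simp only [sigmaSet]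
      rw [hset, Set.ncard_coe_finset]
    have hσm : sigmaSet (cells m) k = (Fm.filter fun p => p.1 ≤ k).card := by
      have hset : cells m ∩ {p | p.1 ≤ k} = ↑(Fm.filter fun p => p.1 ≤ k) := by
        ext p
        simp only [Set.mem_inter_iff, Set.mem_setOf_eq, Finset.coe_filter, hmemFm]
      simp only [sigmaSet]
      rw [hset, Set.ncard_coe_finset]
    have hmain : (Fm.filter fun p => ¬ p.1 ≤ k).card ≤ (Fl.filter fun p => ¬ p.1 ≤ k).card := by
      have hmapsm : ∀ p ∈ Fm.filter fun p => ¬ p.1 ≤ k, blk (T p) ∈ Finset.Icc 1 Mx := by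
        intro p hp
        rw [Finset.mem_filter, hmemFm] at hp
        have h8 := hT1 p hp.1
        exact Finset.mem_Icc.mpr ⟨hblk_pos _ h8.1 h8.2, hblk_leMx _ h8.2⟩
      have hmapsl : ∀ p ∈ Fl.filter fun p => ¬ p.1 ≤ k, uIdx e p ∈ Finset.Icc 1 Mx := by
        intro p hp
        rw [Finset.mem_filter] at hp
        refine Finset.mem_Icc.mpr ⟨?_, Finset.le_sup hp.1⟩
        have h9 := (hcells l p).mp ((hmemFl p).mp hp.1)
        exact le_trans h9.2.1 (Nat.le_add_right _ _)
      rw [Finset.card_eq_sum_card_fiberwise hmapsm, Finset.card_eq_sum_card_fiberwise hmapsl]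
      apply Finset.sum_le_sum
      intro w hw
      rw [Finset.mem_Icc] at hw
      set H := hgt e w with hHdef
      -- upper bound 1: distinct rows in (k, H]
      have hub1 : ((Fm.filter fun p => ¬ p.1 ≤ k).filter fun p => blk (T p) = w).card ≤ H - k := by
        have hmapsrow : ∀ p ∈ (Fm.filter fun p => ¬ p.1 ≤ k).filter fun p => blk (T p) = w,
            p.1 ∈ Finset.Ioc k H := by
          intro p hp
          simp only [Finset.mem_filter, hmemFm] at hp
          obtain ⟨⟨hpm, hrow⟩, hblkw⟩ := hp
          refine Finset.mem_Ioc.mpr ⟨by omega, ?_⟩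
          have h1 := hkey (T p) p hpm le_rfl
          have h2 : hgt e (uIdx e p) ≤ H := hgt_mono he (by omega)
          have h3 := row_lt_hgt he (p := p) ((hcells m p).mp hpm).2.1
          omega
        have hinj : Set.InjOn (Prod.fst : ℕ × ℕ → ℕ)
            (((Fm.filter fun p => ¬ p.1 ≤ k).filter fun p => blk (T p) = w : Finset (ℕ × ℕ)) : Set (ℕ × ℕ)) := by
          intro p hp q hq hpq
          simp only [Finset.coe_filter, Set.mem_setOf_eq, Finset.mem_filter, hmemFm] at hp hq
          exact hdist p hp.1.1 q hq.1.1 hpq (by rw [hp.2, hq.2])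
        have h4 := Finset.card_le_card_of_injOn (Prod.fst : ℕ × ℕ → ℕ) hmapsrow hinj
        rwa [Nat.card_Ioc] at h4
      -- block size = r w
      have hfib : (Fm.filter fun p => blk (T p) = w).card = r w := by
        have hbij : (Fm.filter fun p => blk (T p) = w).card
            = ((Finset.Icc 1 d).filter fun s => blk s = w).card := by
          apply Finset.card_bij (fun p _ => T p)
          · intro p hp
            simp only [Finset.mem_filter, hmemFm] at hp
            have h8 := hT1 p hp.1
            simp only [Finset.mem_filter, Finset.mem_Icc]
            exact ⟨⟨h8.1, h8.2⟩, hp.2⟩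
          · intro p hp q hq hpq
            simp only [Finset.mem_filter, hmemFm] at hp hq
            exact hT2 p hp.1 q hq.1 hpq
          · intro s hs
            simp only [Finset.mem_filter, Finset.mem_Icc] at hs
            obtain ⟨p, hpm, hTp⟩ := hT3 s hs.1.1 hs.1.2
            refine ⟨p, ?_, hTp⟩
            simp only [Finset.mem_filter, hmemFm]
            exact ⟨hpm, by rw [hTp]; exact hs.2⟩
        have hIoc : ((Finset.Icc 1 d).filter fun s => blk s = w)
            = Finset.Ioc (Rlad e l (w - 1)) (Rlad e l w) := by
          ext s
          simp only [Finset.mem_filter, Finset.mem_Icc, Finset.mem_Ioc]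
          constructor
          · rintro ⟨⟨h1, h2⟩, rfl⟩
            exact ⟨hblk_lt s h1 h2, hblk_mem s h2⟩
          · rintro ⟨h1, h2⟩
            have hs1 : 1 ≤ s := by omega
            have hsd : s ≤ d := le_trans h2 hRd
            exact ⟨⟨hs1, hsd⟩, hblk_eq s w hs1 hw.1 h1 h2⟩
        rw [hbij, hIoc, Nat.card_Ioc]
        have h5 := hsplit w hw.1
        have h6 := hRmono (show w - 1 ≤ w by omega)
        omega
      have hub2 : ((Fm.filter fun p => ¬ p.1 ≤ k).filter fun p => blk (T p) = w).card ≤ r w := by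
        rw [← hfib]
        apply Finset.card_le_card
        intro p hp
        simp only [Finset.mem_filter] at hp ⊢
        exact ⟨hp.1.1, hp.2⟩
      -- lower bound on the λ side
      set A := (Finset.Icc 1 H).filter (fun a => (a, w - (a - 1) * (e - 1)) ∈ cells l) with hAdef
      have hnodeu : ∀ a, 1 ≤ a → a ≤ H → uIdx e (a, w - (a - 1) * (e - 1)) = w := by
        intro a h1 h2
        have h3 : (a - 1) * (e - 1) < w := by
          rw [← lt_hgt_iff he]
          omega
        simp only [uIdx]
        omega
      have hAcard : A.card = r w := by
        show _ = (Fl.filter fun p => uIdx e p = w).card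
        apply Finset.card_bij (fun a _ => (a, w - (a - 1) * (e - 1)))
        · intro a ha
          simp only [hAdef, Finset.mem_filter, Finset.mem_Icc] at ha
          simp only [Finset.mem_filter, hmemFl]
          exact ⟨ha.2, hnodeu a ha.1.1 ha.1.2⟩
        · intro a ha a' ha' haa'
          exact congrArg Prod.fst haa'
        · intro p hp
          simp only [Finset.mem_filter, hmemFl] at hp
          obtain ⟨hpc, hpu⟩ := hp
          obtain ⟨h1, h2, h3⟩ := (hcells l p).mp hpc
          have hp2 : p.2 = w - (p.1 - 1) * (e - 1) := by
            simp only [uIdx] at hpu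
            generalize hgen : (p.1 - 1) * (e - 1) = c at hpu ⊢
            omega
          have hpH : p.1 ≤ H := by
            have h4 := row_lt_hgt he (p := p) h2
            rw [hpu] at h4
            omega
          refine ⟨p.1, ?_, ?_⟩
          · simp only [hAdef, Finset.mem_filter, Finset.mem_Icc]
            exact ⟨⟨h1, hpH⟩, by rw [← hp2]; exact hpc⟩
          · rw [← hp2]
      have hstep : ∀ a, 1 ≤ a → a < H → (a, w - (a - 1) * (e - 1)) ∈ cells l →
          (a + 1, w - a * (e - 1)) ∈ cells l := by
        intro a ha haH hmem
        obtain ⟨t, rfl⟩ : ∃ t, a = t + 1 := ⟨a - 1, by omega⟩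
        have hmul : (t + 1) * (e - 1) = t * (e - 1) + (e - 1) := by ring
        have hlt : (t + 1) * (e - 1) < w := by
          rw [← lt_hgt_iff he]
          omega
        obtain ⟨h1, h2, h3⟩ := (hcellsp l _ _).mp hmem
        have hres' := hrestr (t + 1) (by omega)
        rw [show t + 1 - 1 = t from rfl] at h2 h3
        refine (hcellsp l _ _).mpr ⟨by omega, by omega, ?_⟩
        omega
      have hchainA : ∀ t a, a ∈ A → a + t ≤ H → a + t ∈ A := by
        intro t
        induction t with
        | zero => intro a ha _; simpa using ha
        | succ n ih =>
          intro a ha hle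
          have h1 : a + n ∈ A := ih a ha (by omega)
          simp only [hAdef, Finset.mem_filter, Finset.mem_Icc] at h1 ⊢
          have h2 := hstep (a + n) (by omega) (by omega) h1.2
          refine ⟨by omega, ?_⟩
          rw [show a + (n + 1) - 1 = a + n from by omega, show a + (n + 1) = (a + n) + 1 from by omega]
          exact h2
      have hAle : A.card ≤ H := by
        have h1 : A ⊆ Finset.Icc 1 H := by
          intro x hx
          simp only [hAdef, Finset.mem_filter] at hx
          exact hx.1
        have h2 := Finset.card_le_card h1
        rw [Nat.card_Icc] at h2
        omega
      have hAfull : ∀ a, H - A.card < a → a ≤ H → a ∈ A := by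
        intro a ha1 ha2
        by_contra haA
        have hsub : A ⊆ Finset.Ioc a H := by
          intro x hx
          have hx2 := hx
          simp only [hAdef, Finset.mem_filter, Finset.mem_Icc] at hx2
          rw [Finset.mem_Ioc]
          refine ⟨?_, hx2.1.2⟩
          by_contra hxa
          push_neg at hxa
          have h1 : x + (a - x) ∈ A := hchainA (a - x) x hx (by omega)
          rw [show x + (a - x) = a from by omega] at h1
          exact haA h1
        have hcard := Finset.card_le_card hsub
        rw [Nat.card_Ioc] at hcard
        omega
      have hlb : min (r w) (H - k)
          ≤ ((Fl.filter fun p => ¬ p.1 ≤ k).filter fun p => uIdx e p = w).card := by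
        have hmaps2 : ∀ a ∈ Finset.Ioc (max k (H - r w)) H,
            (a, w - (a - 1) * (e - 1))
              ∈ (Fl.filter fun p => ¬ p.1 ≤ k).filter fun p => uIdx e p = w := by
          intro a ha
          rw [Finset.mem_Ioc] at ha
          have haA : a ∈ A := hAfull a (by omega) ha.2
          simp only [hAdef, Finset.mem_filter, Finset.mem_Icc] at haA
          simp only [Finset.mem_filter, hmemFl]
          exact ⟨⟨haA.2, by omega⟩, hnodeu a (by omega) ha.2⟩
        have hinj2 : Set.InjOn (fun a => (a, w - (a - 1) * (e - 1)))
            ↑(Finset.Ioc (max k (H - r w)) H) := by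
          intro x _ y _ hxy
          exact congrArg Prod.fst hxy
        have h4 := Finset.card_le_card_of_injOn _ hmaps2 hinj2
        rw [Nat.card_Ioc] at h4
        omega
      calc ((Fm.filter fun p => ¬ p.1 ≤ k).filter fun p => blk (T p) = w).card
          ≤ min (r w) (H - k) := le_min hub2 hub1
        _ ≤ _ := hlb
    have hl2 : (Fl.filter fun p => p.1 ≤ k).card + (Fl.filter fun p => ¬ p.1 ≤ k).card = d := by
      rw [← hFlcard]
      exact Finset.card_filter_add_card_filter_not _
    have hm2 : (Fm.filter fun p => p.1 ≤ k).card + (Fm.filter fun p => ¬ p.1 ≤ k).card = d := by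
      rw [← hFmcard]
      exact Finset.card_filter_add_card_filter_not _
    rw [hσl, hσm]
    omega
  exact hnotdom hDom

end KN
end

section
/- Let e ≥ 2 and let λ be an e-restricted partition of d. Set r_m = |λ ∩ L_m|, R_m = r_1 + ⋯ + r_m, and λ(m) = λ ∩ (L_1 ∪ ⋯ ∪ L_m) for m ≥ 1. If T is a standard λ-tableau with residue sequence i^T equal to the ladder weight j^λ, then for every m ≥ 1 the shape sh(T_{≤R_m}) equals λ(m). -/
namespace KN

/-- ladder index -/
def lidx (e : ℕ) (p : ℕ × ℕ) : ℕ := p.2 + (p.1 - 1) * (e - 1)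

lemma lidx_pos {e : ℕ} {p : ℕ × ℕ} (h2 : 1 ≤ p.2) : 1 ≤ lidx e p := by
  unfold lidx; omega

lemma lidx_right (e a b : ℕ) : lidx e (a, b + 1) = lidx e (a, b) + 1 := by
  unfold lidx; simp only; omega

lemma lidx_down (e a b : ℕ) (h : 1 ≤ a) : lidx e (a + 1, b) = lidx e (a, b) + (e - 1) := by
  unfold lidx
  simp only
  have h1 : a + 1 - 1 = (a - 1) + 1 := by omega
  rw [h1, add_one_mul]
  omega

lemma mem_ladder_lidx {e : ℕ} {p : ℕ × ℕ} (h1 : 1 ≤ p.1) (h2 : 1 ≤ p.2) :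
    p ∈ ladder e (lidx e p) := by
  refine ⟨p.1 - 1, ?_, ?_⟩
  · unfold lidx; omega
  · unfold lidx
    have h3 : p.2 + (p.1 - 1) * (e - 1) - (p.1 - 1) * (e - 1) = p.2 := by omega
    rw [h3]
    ext
    · simp; omega
    · simp

lemma ladder_coords {e m : ℕ} {p : ℕ × ℕ} (h : p ∈ ladder e m) :
    1 ≤ p.1 ∧ 1 ≤ p.2 ∧ m = lidx e p := by
  obtain ⟨k, hk, rfl⟩ := h
  unfold lidx
  simp only
  have h1 : 1 + k - 1 = k := by omega
  rw [h1]
  omega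

lemma ladder_disjoint {e m m' : ℕ} {p : ℕ × ℕ} (h : p ∈ ladder e m) (h' : p ∈ ladder e m') :
    m = m' := by
  rw [(ladder_coords h).2.2, (ladder_coords h').2.2]

lemma Rlad_eq (e : ℕ) (l : ℕ → ℕ) (hfin : (cells l).Finite) (m : ℕ) :
    Rlad e l m = (cells l ∩ ⋃ u ∈ Finset.Icc 1 m, ladder e u).ncard := by
  induction m with
  | zero => simp [Rlad]
  | succ m ih =>
      have hIcc : Finset.Icc 1 (m + 1) = insert (m + 1) (Finset.Icc 1 m) := by
        ext x; simp only [Finset.mem_Icc, Finset.mem_insert]; omega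
      have hsum : Rlad e l (m + 1) = Rlad e l m + (cells l ∩ ladder e (m + 1)).ncard := by
        unfold Rlad
        rw [hIcc, Finset.sum_insert (by simp)]
        ring
      have hset : (cells l ∩ ⋃ u ∈ Finset.Icc 1 (m + 1), ladder e u) =
          (cells l ∩ ⋃ u ∈ Finset.Icc 1 m, ladder e u) ∪ (cells l ∩ ladder e (m + 1)) := by
        rw [hIcc]
        simp only [Finset.mem_insert, Set.iUnion_iUnion_eq_or_left]
        rw [Set.inter_union_distrib_left, Set.union_comm]
      have hdisj : Disjoint (cells l ∩ ⋃ u ∈ Finset.Icc 1 m, ladder e u)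
          (cells l ∩ ladder e (m + 1)) := by
        rw [Set.disjoint_left]
        rintro p ⟨-, hp⟩ ⟨-, hp'⟩
        simp only [Set.mem_iUnion, Finset.mem_Icc] at hp
        obtain ⟨u, ⟨-, hu⟩, hpu⟩ := hp
        have := ladder_disjoint hpu hp'
        omega
      rw [hsum, hset, Set.ncard_union_eq hdisj
        (hfin.subset Set.inter_subset_left) (hfin.subset Set.inter_subset_left), ih]

lemma Rlad_mono (e : ℕ) (l : ℕ → ℕ) {m m' : ℕ} (h : m ≤ m') : Rlad e l m ≤ Rlad e l m' :=
  Finset.sum_le_sum_of_subset (Finset.Icc_subset_Icc_right h)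

lemma Rlad_zero (e : ℕ) (l : ℕ → ℕ) : Rlad e l 0 = 0 := by simp [Rlad]

lemma Rlad_le (e d : ℕ) (l : ℕ → ℕ) (hl : IsPartitionOf l d) (m : ℕ) : Rlad e l m ≤ d := by
  rw [Rlad_eq e l hl.2.1 m, ← hl.2.2]
  exact Set.ncard_le_ncard Set.inter_subset_left hl.2.1

lemma exists_Rlad_eq_d (e d : ℕ) (l : ℕ → ℕ) (hl : IsPartitionOf l d) :
    ∃ M, Rlad e l M = d := by
  obtain ⟨M, hM⟩ := ((hl.2.1.image (lidx e)).bddAbove)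
  refine ⟨M, ?_⟩
  rw [Rlad_eq e l hl.2.1 M, ← hl.2.2]
  congr 1
  rw [Set.inter_eq_left]
  intro p hp
  have h1 : 1 ≤ p.1 := hp.1
  have h2 : 1 ≤ p.2 := hp.2.1
  have hle : lidx e p ≤ M := hM ⟨p, hp, rfl⟩
  simp only [Set.mem_iUnion]
  exact ⟨lidx e p, by simp only [Finset.mem_Icc]; exact ⟨lidx_pos h2, hle⟩,
    mem_ladder_lidx h1 h2⟩

lemma res_eq_lidx (e : ℕ) (he : 2 ≤ e) {p : ℕ × ℕ} (h1 : 1 ≤ p.1) (h2 : 1 ≤ p.2) :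
    res e p = ((lidx e p - 1 : ℕ) : ZMod e) := by
  have key : lidx e p - 1 = (p.2 - 1) + (p.1 - 1) * (e - 1) := by
    unfold lidx
    have := Nat.zero_le ((p.1 - 1) * (e - 1))
    omega
  rw [key]
  push_cast [Nat.cast_sub h2, Nat.cast_sub h1, Nat.cast_sub (by omega : 1 ≤ e)]
  rw [res]
  have he0 : (e : ZMod e) = 0 := ZMod.natCast_self e
  rw [he0]
  ring

theorem shape_of_initial_segment'
    (e d : ℕ) (he : 2 ≤ e) (l : ℕ → ℕ)
    (hl : IsPartitionOf l d)
    (T : ℕ × ℕ → ℕ) (hT : IsStandardTableau (cells l) d T)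
    (hres : ∀ p ∈ cells l, res e p = ladderWeight e l (T p)) :
    ∀ m, 1 ≤ m →
      {p | p ∈ cells l ∧ T p ≤ Rlad e l m} =
        cells l ∩ ⋃ u ∈ Finset.Icc 1 m, ladder e u := by
  have hfin := hl.2.1
  obtain ⟨Mbig, hMbig⟩ := exists_Rlad_eq_d e d l hl
  have hne : ∀ s, s ≤ d → {m : ℕ | s ≤ Rlad e l m}.Nonempty := fun s hs => ⟨Mbig, by
    simp only [Set.mem_setOf_eq, hMbig]; exact hs⟩
  set M : ℕ → ℕ := fun s => sInf {m : ℕ | s ≤ Rlad e l m} with hM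
  have hMmem : ∀ s, s ≤ d → s ≤ Rlad e l (M s) := fun s hs => Nat.sInf_mem (hne s hs)
  have hMpos : ∀ s, 1 ≤ s → s ≤ d → 1 ≤ M s := by
    intro s hs hsd
    by_contra h
    have h0 : M s = 0 := by omega
    have hmem := hMmem s hsd
    rw [h0, Rlad_zero] at hmem
    omega
  have hMlt : ∀ s, 1 ≤ s → s ≤ d → Rlad e l (M s - 1) < s := by
    intro s hs hsd
    have h1 : M s - 1 < M s := by have := hMpos s hs hsd; omega
    have h2 := Nat.notMem_of_lt_sInf h1
    simp only [Set.mem_setOf_eq, not_le] at h2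
    exact h2
  have hMmono : ∀ s t, s ≤ t → t ≤ d → M s ≤ M t := by
    intro s t hst htd
    exact Nat.sInf_le (by
      simp only [Set.mem_setOf_eq]
      exact le_trans hst (hMmem t htd))
  have hMle : ∀ s u, s ≤ Rlad e l u → M s ≤ u := fun s u h => Nat.sInf_le h
  -- key lemma: every node sits in the ladder predicted by its label
  have key : ∀ s, ∀ p ∈ cells l, T p = s → lidx e p = M s := by
    intro s
    induction s using Nat.strong_induction_on with
    | _ s ih =>
      rintro p hp rfl
      obtain ⟨hs1, hsd⟩ := hT.1 p hp
      have h1 : 1 ≤ p.1 := hp.1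
      have h2 : 1 ≤ p.2 := hp.2.1
      have hu1 : 1 ≤ lidx e p := lidx_pos h2
      have hm1 : 1 ≤ M (T p) := hMpos _ hs1 hsd
      have hcong : lidx e p % e = M (T p) % e := by
        have h := hres p hp
        rw [res_eq_lidx e he h1 h2] at h
        rw [ladderWeight] at h
        have h' : ((lidx e p - 1 : ℕ) : ZMod e) = ((M (T p) - 1 : ℕ) : ZMod e) := h
        rw [Nat.cast_sub hu1, Nat.cast_sub hm1] at h'
        have h2' : ((lidx e p : ℕ) : ZMod e) = ((M (T p) : ℕ) : ZMod e) := by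
          have := sub_left_inj.mp h'
          exact_mod_cast this
        rw [ZMod.natCast_eq_natCast_iff'] at h2'
        exact h2'
      rcases lt_trichotomy (lidx e p) (M (T p)) with hlt | heq | hgt
      · -- lidx < M : counting contradiction
        exfalso
        set u := lidx e p with hu
        set A := cells l ∩ ⋃ v ∈ Finset.Icc 1 u, ladder e v with hA
        set B := {q | q ∈ cells l ∧ T q ≤ Rlad e l u} with hB
        have hRus : Rlad e l u < T p := by
          calc Rlad e l u ≤ Rlad e l (M (T p) - 1) := Rlad_mono e l (by omega)
            _ < T p := hMlt _ hs1 hsd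
        have hBA : B ⊆ A := by
          rintro q ⟨hqc, hqR⟩
          have hq1 : 1 ≤ q.1 := hqc.1
          have hq2 : 1 ≤ q.2 := hqc.2.1
          have hqlt : T q < T p := lt_of_le_of_lt hqR hRus
          have hql : lidx e q = M (T q) := ih (T q) hqlt q hqc rfl
          have hqu : lidx e q ≤ u := by rw [hql]; exact hMle _ _ hqR
          have hql1 : 1 ≤ lidx e q := lidx_pos hq2
          refine ⟨hqc, ?_⟩
          simp only [Set.mem_iUnion]
          exact ⟨lidx e q, by simp only [Finset.mem_Icc]; omega, mem_ladder_lidx hq1 hq2⟩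
        have hAfin : A.Finite := hfin.subset Set.inter_subset_left
        have hAcard : A.ncard = Rlad e l u := (Rlad_eq e l hfin u).symm
        have hBcard : B.ncard = Rlad e l u := by
          have hinj : Set.InjOn T B := fun x hx y hy hxy => hT.2.1 x hx.1 y hy.1 hxy
          have himg : T '' B = Set.Icc 1 (Rlad e l u) := by
            ext t
            constructor
            · rintro ⟨q, ⟨hqc, hqR⟩, rfl⟩
              exact ⟨(hT.1 q hqc).1, hqR⟩
            · rintro ⟨ht1, ht2⟩
              obtain ⟨q, hqc, rfl⟩ := hT.2.2.1 t ht1 (le_trans ht2 (Rlad_le e d l hl u))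
              exact ⟨q, ⟨hqc, ht2⟩, rfl⟩
          calc B.ncard = (T '' B).ncard := (Set.ncard_image_of_injOn hinj).symm
            _ = (Set.Icc 1 (Rlad e l u)).ncard := by rw [himg]
            _ = Rlad e l u := by
                rw [← Finset.coe_Icc, Set.ncard_coe_finset, Nat.card_Icc]; omega
        have hBeqA : B = A := Set.eq_of_subset_of_ncard_le hBA (by omega) hAfin
        have hpA : p ∈ A := by
          refine ⟨hp, ?_⟩
          simp only [Set.mem_iUnion]
          exact ⟨u, by simp only [Finset.mem_Icc]; omega, mem_ladder_lidx h1 h2⟩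
        rw [← hBeqA] at hpA
        exact absurd hpA.2 (not_le.mpr hRus)
      · exact heq
      · -- lidx > M : neighbour contradiction
        exfalso
        have hue : M (T p) + e ≤ lidx e p := by
          have hdvd : e ∣ lidx e p - M (T p) :=
            (Nat.modEq_iff_dvd' (le_of_lt hgt)).mp hcong.symm
          obtain ⟨c, hc⟩ := hdvd
          have h1' : 1 ≤ e * c := by omega
          have hcpos : 1 ≤ c := by
            rcases Nat.eq_zero_or_pos c with h0 | h0
            · subst h0; simp at h1'
            · exact h0
          have h2' : e ≤ e * c := Nat.le_mul_of_pos_right e hcpos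
          omega
        have hq : ∃ q, q ∈ cells l ∧ T q < T p ∧ lidx e p ≤ lidx e q + (e - 1) := by
          rcases Nat.lt_or_ge p.2 2 with hb | hb
          · -- p.2 = 1
            have hb1 : p.2 = 1 := by omega
            have hpeq : p = (p.1, 1) := by rw [← hb1]
            have ha2 : 2 ≤ p.1 := by
              by_contra hcon
              have ha1 : p.1 = 1 := by omega
              have hl1 : lidx e p = 1 := by
                unfold lidx
                rw [ha1, hb1]
                simp
              omega
            have hdec : l p.1 ≤ l (p.1 - 1) := by
              have h := hl.1.1 (p.1 - 1) (by omega)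
              rwa [Nat.sub_add_cancel (by omega)] at h
            have hlp : 1 ≤ l p.1 := by rw [← hb1]; exact hp.2.2
            have hqc : (p.1 - 1, 1) ∈ cells l := by
              refine ⟨by simp only; omega, le_refl 1, ?_⟩
              simp only
              omega
            have hstep : T (p.1 - 1, 1) < T (p.1 - 1 + 1, 1) := by
              apply hT.2.2.2.2 (p.1 - 1) 1 hqc
              have hpp : (p.1 - 1 + 1, 1) = p := by
                rw [hpeq]
                congr 1
                omega
              rw [hpp]
              exact hp
            have hlidx : lidx e (p.1 - 1 + 1, 1) = lidx e (p.1 - 1, 1) + (e - 1) :=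
              lidx_down e (p.1 - 1) 1 (by omega)
            have hpp : (p.1 - 1 + 1, 1) = p := by
              rw [hpeq]; congr 1; omega
            rw [hpp] at hstep hlidx
            exact ⟨(p.1 - 1, 1), hqc, hstep, by omega⟩
          · -- p.2 ≥ 2
            have hqc : (p.1, p.2 - 1) ∈ cells l := by
              refine ⟨by simp only; omega, by simp only; omega, ?_⟩
              simp only
              have := hp.2.2
              omega
            have hstep : T (p.1, p.2 - 1) < T (p.1, p.2 - 1 + 1) := by
              apply hT.2.2.2.1 p.1 (p.2 - 1) hqc
              have hpp : (p.1, p.2 - 1 + 1) = p := by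
                congr 1
                omega
              rw [hpp]
              exact hp
            have hlidx : lidx e (p.1, p.2 - 1 + 1) = lidx e (p.1, p.2 - 1) + 1 :=
              lidx_right e p.1 (p.2 - 1)
            have hpp : (p.1, p.2 - 1 + 1) = p := by congr 1; omega
            rw [hpp] at hstep hlidx
            exact ⟨(p.1, p.2 - 1), hqc, hstep, by omega⟩
        obtain ⟨q, hqc, hqlt, hqlidx⟩ := hq
        have hql : lidx e q = M (T q) := ih (T q) hqlt q hqc rfl
        have hmono : M (T q) ≤ M (T p) := hMmono (T q) (T p) (le_of_lt hqlt) hsd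
        omega
  -- main statement
  intro m hm1
  ext p
  simp only [Set.mem_setOf_eq, Set.mem_inter_iff, Set.mem_iUnion, Finset.mem_Icc]
  constructor
  · rintro ⟨hpc, hpR⟩
    have h1 : 1 ≤ p.1 := hpc.1
    have h2 : 1 ≤ p.2 := hpc.2.1
    have hkey := key (T p) p hpc rfl
    have hMm : M (T p) ≤ m := hMle _ _ hpR
    have hu1 : 1 ≤ lidx e p := lidx_pos h2
    exact ⟨hpc, lidx e p, ⟨hu1, by omega⟩, mem_ladder_lidx h1 h2⟩
  · rintro ⟨hpc, v, ⟨hv1, hvm⟩, hpv⟩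
    have hkey := key (T p) p hpc rfl
    have hveq : v = lidx e p := (ladder_coords hpv).2.2
    refine ⟨hpc, ?_⟩
    have hsd : T p ≤ d := (hT.1 p hpc).2
    calc T p ≤ Rlad e l (M (T p)) := hMmem _ hsd
      _ ≤ Rlad e l m := Rlad_mono e l (by omega)


/-- for a standard `λ`-tableau `T` with `i^T = j^λ`, the shape of
`T_{≤ R_m}` is `λ ∩ (L_1 ∪ ⋯ ∪ L_m)`. -/
theorem shape_of_initial_segment
    (e d : ℕ) (he : 2 ≤ e) (l : ℕ → ℕ)
    (hl : IsPartitionOf l d) (hrestr : IsRestricted e l)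
    (T : ℕ × ℕ → ℕ) (hT : IsStandardTableau (cells l) d T)
    (hres : ∀ p ∈ cells l, res e p = ladderWeight e l (T p)) :
    ∀ m, 1 ≤ m →
      {p | p ∈ cells l ∧ T p ≤ Rlad e l m} =
        cells l ∩ ⋃ u ∈ Finset.Icc 1 m, ladder e u :=
  shape_of_initial_segment' e d he l hl T hT hres

end KN
end
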